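/- arXiv:1305.7168 — 5 statements merged into one kernel-verified Lean document; each statement's English description precedes it below -/
import Mathlib

section
/- Let N be an even natural number. There is a bijection from Z¹_N, the set of partitions of N in which every odd part occurs an even number of times, onto BP^{N/2}_{1,1}, the set of bipartitions of N/2 of excess (1,1). The bijection replaces each maximal run (string) of equal parts 2a, 2a, …, 2a by a, a, …, a of the same length, and each maximal run 2a+1, 2a+1, …, 2a+1 (necessarily of even length) by a, a+1, a, a+1, …, a, a+1 of the same length. -/
/-! In a partition whose odd parts have even multiplicities, the odd parts before the start of
a string form complete strings of even length. So the position of an odd entry within its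
string has the parity of the number of odd entries before it, and
`T2 ν i = (νᵢ + (that count mod 2)) / 2` needs no strings at all (`halve`).

Conversely, read a bipartition `λ` of excess `(1,1)` from the left, greedily matching each
unmatched `a` followed by `a + 1`; with `cᵢ ∈ {0, 1}` marking the second entries of matched
pairs (`closesPair`), the preimage is `νᵢ = 2λᵢ + cᵢ₊₁ - cᵢ`: every matched pair `a, a + 1`
becomes `2a + 1, 2a + 1` and every other `a` becomes `2a`. This identity telescopes in the sum
and, together with `λᵢ₊₂ ≤ λᵢ`, makes `ν` weakly decreasing. -/

/-- A sequence of naturals that is eventually zero. -/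
def EventuallyZero (l : ℕ → ℕ) : Prop := ∃ N, ∀ m, N ≤ m → l m = 0

/-- A bipartition: eventually zero, with `λ₁ ≥ λ₃ ≥ …` and `λ₂ ≥ λ₄ ≥ …`
(0-indexed: `l i = λ_{i+1}`). -/
def IsBipartition (l : ℕ → ℕ) : Prop :=
  EventuallyZero l ∧ ∀ i, l (i + 2) ≤ l i

/-- A partition: eventually zero and weakly decreasing. -/
def IsPartitionSeq (l : ℕ → ℕ) : Prop :=
  EventuallyZero l ∧ ∀ i, l (i + 1) ≤ l i

/-- `λ` has excess `(e, e')`: `λᵢ + e ≥ λᵢ₊₁` for odd (paper) `i`,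
`λᵢ + e' ≥ λᵢ₊₁` for even (paper) `i`.  With 0-based indices, paper-odd
positions are the even Lean indices. -/
def HasExcess (e e' : ℕ) (l : ℕ → ℕ) : Prop :=
  ∀ i, (Even i → l (i + 1) ≤ l i + e) ∧ (Odd i → l (i + 1) ≤ l i + e')

/-- The (finite) sum of an eventually zero sequence is `n`. -/
def SumsTo (l : ℕ → ℕ) (n : ℕ) : Prop :=
  ∃ N, (∀ m, N ≤ m → l m = 0) ∧ ∑ i ∈ Finset.range N, l i = n

/-- Starting index of the maximal run (string) of entries equal to `ν i`. -/
noncomputable def strStart (ν : ℕ → ℕ) (i : ℕ) : ℕ := sInf {j | ν j = ν i}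

/-- Length of the string of entries equal to `ν i`. -/
noncomputable def strLen (ν : ℕ → ℕ) (i : ℕ) : ℕ := {j | ν j = ν i}.ncard

/-- Every odd part occurs an even number of times. -/
def OddPartsEvenMult (ν : ℕ → ℕ) : Prop := ∀ c, Odd c → Even ({i | ν i = c}.ncard)

/-- Every even positive part occurs an even number of times. -/
def EvenPartsEvenMult (ν : ℕ → ℕ) : Prop :=
  ∀ c, 0 < c → Even c → Even ({i | ν i = c}.ncard)


/-- The substitution of 3.4(a): each string 2a,...,2a becomes a,...,a; each string
2a+1,...,2a+1 (of even length) becomes a,a+1,a,a+1,.... -/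
noncomputable def T2 (ν : ℕ → ℕ) : ℕ → ℕ := fun i =>
  if ν i = 0 then 0
  else if ν i % 2 = 0 then ν i / 2
  else if (i - strStart ν i) % 2 = 0 then ν i / 2 else ν i / 2 + 1

namespace Z1Bij

def oddCount (ν : ℕ → ℕ) (n : ℕ) : ℕ := ∑ j ∈ Finset.range n, ν j % 2

def halve (ν : ℕ → ℕ) (i : ℕ) : ℕ := (ν i + oddCount ν i % 2) / 2

def closesPair (l : ℕ → ℕ) : ℕ → Bool
  | 0 => false
  | i + 1 => !closesPair l i && l (i + 1) == l i + 1

def unhalve (l : ℕ → ℕ) (i : ℕ) : ℕ :=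
  2 * l i + (closesPair l (i + 1)).toNat - (closesPair l i).toNat

theorem closesPair_succ {l : ℕ → ℕ} {i : ℕ} :
    closesPair l (i + 1) = true ↔ closesPair l i = false ∧ l (i + 1) = l i + 1 := by
  simp [closesPair]

section Forward

variable {ν : ℕ → ℕ}

theorem oddCount_succ (ν : ℕ → ℕ) (n : ℕ) : oddCount ν (n + 1) = oddCount ν n + ν n % 2 :=
  Finset.sum_range_succ _ _

theorem oddCount_add_of_odd {s k : ℕ} (h : ∀ j < k, Odd (ν (s + j))) :
    oddCount ν (s + k) = oddCount ν s + k := by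
  induction k with
  | zero => rfl
  | succ k ih =>
    rw [← add_assoc, oddCount_succ, ih fun j hj => h j (by omega),
      Nat.odd_iff.mp (h k (by omega)), add_assoc]

/-- The odd parts before `t` are exactly the odd values exceeding `ν t`, each counted with its
full (even) multiplicity. -/
theorem even_oddCount_of_lt (hν : Antitone ν) (ho : OddPartsEvenMult ν) {t : ℕ}
    (ht : ∀ j < t, Odd (ν j) → ν t < ν j) : Even (oddCount ν t) := by
  classical
  rw [oddCount, Finset.sum_comp (· % 2) ν]
  refine Finset.even_sum _ fun c hc => ?_
  rcases Nat.even_or_odd c with hc2 | hc2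
  · simp [Nat.even_iff.mp hc2]
  obtain ⟨j, hj, rfl⟩ := Finset.mem_image.mp hc
  have hfiber : {i | ν i = ν j} = ↑({i ∈ Finset.range t | ν i = ν j}) := by
    ext i
    simp only [Set.mem_ofPred_eq, Finset.coe_filter, Finset.mem_range]
    refine ⟨fun hi => ⟨?_, hi⟩, And.right⟩
    by_contra hit
    have := hν (not_lt.mp hit)
    have := ht j (Finset.mem_range.mp hj) hc2
    omega
  rw [smul_eq_mul, ← Set.ncard_coe_finset, ← hfiber]
  exact (ho _ hc2).mul_right _

theorem even_oddCount_of_even (hν : Antitone ν) (ho : OddPartsEvenMult ν) {i : ℕ}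
    (h : Even (ν i)) : Even (oddCount ν i) :=
  even_oddCount_of_lt hν ho fun _ hj hodd =>
    (hν hj.le).lt_of_ne fun e => (Nat.not_odd_iff_even.mpr h) (e ▸ hodd)

theorem succ_eq_of_odd_of_even_oddCount (hν : Antitone ν) (ho : OddPartsEvenMult ν) {i : ℕ}
    (h : Odd (ν i)) (he : Even (oddCount ν i)) : ν (i + 1) = ν i := by
  by_contra hne
  have hlt := (hν (Nat.le_succ i)).lt_of_ne hne
  have := even_oddCount_of_lt hν ho (t := i + 1) fun _ hj _ => hlt.trans_le (hν (by omega))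
  rw [oddCount_succ, Nat.even_iff] at this
  rw [Nat.even_iff] at he
  rw [Nat.odd_iff] at h
  omega

theorem T2_eq_halve (hν : Antitone ν) (ho : OddPartsEvenMult ν) : T2 ν = halve ν := by
  funext i
  rcases Nat.even_or_odd (ν i) with hi | hi
  · have : ν i % 2 = 0 := Nat.even_iff.mp hi
    have := Nat.even_iff.mp (even_oddCount_of_even hν ho hi)
    simp only [T2, halve]
    split_ifs <;> omega
  set s := strStart ν i
  have hs : ν s = ν i := Nat.sInf_mem (⟨i, rfl⟩ : {j | ν j = ν i}.Nonempty)
  have hsi : s ≤ i := Nat.sInf_le rfl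
  have hstart : Even (oddCount ν s) := even_oddCount_of_lt hν ho fun j hj _ =>
    (hν hj.le).lt_of_ne fun e => Nat.notMem_of_lt_sInf hj (e.symm.trans hs)
  have hrun : oddCount ν i = oddCount ν s + (i - s) := by
    have := oddCount_add_of_odd (ν := ν) (s := s) (k := i - s) fun j hj => by
      rwa [le_antisymm (hs ▸ hν (by omega)) (hν (by omega) : ν i ≤ ν (s + j))]
    rwa [Nat.add_sub_cancel' hsi] at this
  rw [Nat.even_iff] at hstart
  rw [Nat.odd_iff] at hi
  simp only [T2, halve]
  split_ifs <;> omega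

theorem halve_succ_le (hν : Antitone ν) (i : ℕ) : halve ν (i + 1) ≤ halve ν i + 1 := by
  have := hν (Nat.le_add_right i 1)
  simp only [halve]
  omega

theorem halve_add_two_le (hν : Antitone ν) (i : ℕ) : halve ν (i + 2) ≤ halve ν i := by
  have h1 : ν (i + 1) ≤ ν i := hν (by omega)
  have h2 : ν (i + 2) ≤ ν (i + 1) := hν (by omega)
  have h12 := oddCount_succ ν i
  have h23 : oddCount ν (i + 2) = _ := oddCount_succ ν (i + 1)
  simp only [halve]
  omega

theorem halve_succ_eq_add_one_iff (hν : Antitone ν) (ho : OddPartsEvenMult ν) {i : ℕ}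
    (he : Even (oddCount ν i)) : halve ν (i + 1) = halve ν i + 1 ↔ Odd (ν i) := by
  have hsucc := oddCount_succ ν i
  rw [Nat.even_iff] at he
  simp only [halve]
  constructor
  · intro h
    have := hν (Nat.le_add_right i 1)
    rw [Nat.odd_iff]
    omega
  · intro hi
    rw [succ_eq_of_odd_of_even_oddCount hν ho hi (Nat.even_iff.mpr he)]
    rw [Nat.odd_iff] at hi
    omega

theorem closesPair_halve (hν : Antitone ν) (ho : OddPartsEvenMult ν) (i : ℕ) :
    closesPair (halve ν) i = true ↔ oddCount ν i % 2 = 1 := by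
  induction i with
  | zero => simp [closesPair, oddCount]
  | succ i ih =>
    rw [closesPair_succ, oddCount_succ, Bool.eq_false_iff, ne_eq, ih]
    rcases Nat.even_or_odd (oddCount ν i) with he | ho'
    · rw [halve_succ_eq_add_one_iff hν ho he, Nat.odd_iff]
      rw [Nat.even_iff] at he
      omega
    · have hi : ¬ Even (ν i) := fun h =>
        Nat.not_even_iff_odd.mpr ho' (even_oddCount_of_even hν ho h)
      rw [Nat.not_even_iff_odd, Nat.odd_iff] at hi
      rw [Nat.odd_iff] at ho'
      omega

theorem unhalve_halve (hν : Antitone ν) (ho : OddPartsEvenMult ν) : unhalve (halve ν) = ν := by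
  funext i
  have hc : ∀ j, (closesPair (halve ν) j).toNat = oddCount ν j % 2 := fun j => by
    have := closesPair_halve hν ho j
    cases h : closesPair (halve ν) j <;>
      simp only [h, Bool.toNat_false, Bool.toNat_true, Bool.false_eq_true, false_iff, true_iff]
        at this ⊢ <;>
      omega
  have hpar : ν i % 2 = 0 → oddCount ν i % 2 = 0 := fun h =>
    Nat.even_iff.mp (even_oddCount_of_even hν ho (Nat.even_iff.mpr h))
  have := oddCount_succ ν i
  simp only [unhalve, hc, halve]
  omega

theorem hasExcess_halve (hν : Antitone ν) : HasExcess 1 1 (halve ν) :=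
  fun i => ⟨fun _ => halve_succ_le hν i, fun _ => halve_succ_le hν i⟩

theorem halve_eq_zero {i : ℕ} (h : ν i = 0) : halve ν i = 0 := by
  simp only [halve, h]
  omega

theorem isBipartition_halve (hν : Antitone ν) (hz : EventuallyZero ν) :
    IsBipartition (halve ν) := by
  obtain ⟨M, hM⟩ := hz
  exact ⟨⟨M, fun m hm => halve_eq_zero (hM m hm)⟩, halve_add_two_le hν⟩

end Forward

section Backward

variable {l : ℕ → ℕ}

theorem closesPair_eq_false_of_eq_zero {i : ℕ} (h : l i = 0) : closesPair l i = false := by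
  cases i <;> simp [closesPair, h]

theorem toNat_closesPair_add_succ_le (l : ℕ → ℕ) (i : ℕ) :
    (closesPair l i).toNat + (closesPair l (i + 1)).toNat ≤ 1 := by
  cases h : closesPair l (i + 1)
  · simpa using Bool.toNat_le _
  · simp [(closesPair_succ.mp h).1]

theorem toNat_closesPair_le (l : ℕ → ℕ) (i : ℕ) : (closesPair l i).toNat ≤ l i := by
  cases i with
  | zero => simp [closesPair]
  | succ i =>
    cases h : closesPair l (i + 1)
    · simp
    · simp [(closesPair_succ.mp h).2]

theorem unhalve_add_toNat_closesPair (l : ℕ → ℕ) (i : ℕ) :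
    unhalve l i + (closesPair l i).toNat = 2 * l i + (closesPair l (i + 1)).toNat := by
  have := toNat_closesPair_le l i
  unfold unhalve
  omega

theorem unhalve_succ_eq_of_closesPair {i : ℕ} (h : closesPair l (i + 1) = true) :
    unhalve l (i + 1) = unhalve l i := by
  have h0 := unhalve_add_toNat_closesPair l i
  have h1 := unhalve_add_toNat_closesPair l (i + 1)
  have h2 := toNat_closesPair_add_succ_le l (i + 1)
  obtain ⟨hc, hl⟩ := closesPair_succ.mp h
  simp only [h, hc, Bool.toNat_true, Bool.toNat_false] at h0 h1 h2
  omega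

theorem closesPair_or_closesPair_succ_of_odd_unhalve {i : ℕ} (h : Odd (unhalve l i)) :
    closesPair l i = true ∨ closesPair l (i + 1) = true := by
  have := unhalve_add_toNat_closesPair l i
  rw [Nat.odd_iff] at h
  cases hc : closesPair l i <;> cases hc' : closesPair l (i + 1) <;> simp [hc, hc'] at this ⊢
  omega

theorem halve_unhalve (l : ℕ → ℕ) : halve (unhalve l) = l := by
  have hpar : ∀ i, oddCount (unhalve l) i % 2 = (closesPair l i).toNat := by
    intro i
    induction i with
    | zero => rfl
    | succ i ih =>
      have := unhalve_add_toNat_closesPair l i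
      have := toNat_closesPair_add_succ_le l i
      rw [oddCount_succ]
      omega
  funext i
  have := unhalve_add_toNat_closesPair l i
  have := Bool.toNat_le (closesPair l (i + 1))
  simp only [halve, hpar]
  omega

theorem succ_add_toNat_closesPair_le (hb : ∀ i, l (i + 2) ≤ l i)
    (he : ∀ i, l (i + 1) ≤ l i + 1) (i : ℕ) :
    l (i + 1) + (closesPair l i).toNat ≤ l i + (closesPair l (i + 1)).toNat := by
  cases hc' : closesPair l (i + 1)
  · cases hc : closesPair l i
    · have hne : l (i + 1) ≠ l i + 1 := fun h => by simp [closesPair_succ.mpr ⟨hc, h⟩] at hc'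
      have := he i
      simp only [Bool.toNat_false]
      omega
    · cases i with
      | zero => simp [closesPair] at hc
      | succ j =>
        have := (closesPair_succ.mp hc).2
        have : l (j + 1 + 1) ≤ l j := hb j
        simp only [Bool.toNat_false, Bool.toNat_true]
        omega
  · obtain ⟨hc, hl⟩ := closesPair_succ.mp hc'
    simp only [hc, Bool.toNat_true, Bool.toNat_false]
    omega

theorem antitone_unhalve (hb : ∀ i, l (i + 2) ≤ l i) (he : ∀ i, l (i + 1) ≤ l i + 1) :
    Antitone (unhalve l) := by
  refine antitone_nat_of_succ_le fun i => ?_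
  have := succ_add_toNat_closesPair_le hb he i
  have := toNat_closesPair_le l i
  have := hb i
  unfold unhalve
  cases hc : closesPair l (i + 1 + 1)
  · simp only [Bool.toNat_false]
    omega
  · obtain ⟨hc', hl⟩ := closesPair_succ.mp hc
    have hl : l (i + 2) = l (i + 1) + 1 := hl
    simp only [hc', Bool.toNat_false, Bool.toNat_true] at *
    omega

theorem sum_range_unhalve (l : ℕ → ℕ) (n : ℕ) :
    ∑ i ∈ Finset.range n, unhalve l i =
      2 * ∑ i ∈ Finset.range n, l i + (closesPair l n).toNat := by
  induction n with
  | zero => simp [closesPair]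
  | succ n ih =>
    have := unhalve_add_toNat_closesPair l n
    rw [Finset.sum_range_succ, Finset.sum_range_succ, ih]
    omega

theorem unhalve_eq_zero {i : ℕ} (h : l i = 0) (h' : l (i + 1) = 0) : unhalve l i = 0 := by
  simp [unhalve, h, closesPair_eq_false_of_eq_zero h']

theorem sumsTo_unhalve {n : ℕ} (h : SumsTo l n) : SumsTo (unhalve l) (2 * n) := by
  obtain ⟨M, hM, hs⟩ := h
  refine ⟨M, fun m hm => unhalve_eq_zero (hM m hm) (hM (m + 1) (by omega)), ?_⟩
  rw [sum_range_unhalve, hs, closesPair_eq_false_of_eq_zero (hM M le_rfl), Bool.toNat_false,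
    add_zero]

theorem eventuallyZero_unhalve (h : EventuallyZero l) : EventuallyZero (unhalve l) := by
  obtain ⟨M, hM⟩ := h
  exact ⟨M, fun m hm => unhalve_eq_zero (hM m hm) (hM (m + 1) (by omega))⟩

/-- Odd entries of `unhalve l` come in adjacent equal pairs, one for each `i` with
`closesPair l (i + 1)`. -/
theorem oddPartsEvenMult_unhalve (hz : EventuallyZero l) : OddPartsEvenMult (unhalve l) := by
  obtain ⟨M, hM⟩ := hz
  intro c hc
  set T := {i | closesPair l (i + 1) = true ∧ unhalve l i = c}
  have hfiber : {i | unhalve l i = c} = T ∪ (· + 1) '' T := by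
    ext i
    simp only [T, Set.mem_ofPred_eq, Set.mem_union, Set.mem_image]
    refine ⟨fun hi => ?_, ?_⟩
    · rcases closesPair_or_closesPair_succ_of_odd_unhalve (hi ▸ hc) with h | h
      · cases i with
        | zero => simp [closesPair] at h
        | succ j =>
          exact Or.inr ⟨j, ⟨h, (unhalve_succ_eq_of_closesPair h).symm.trans hi⟩, rfl⟩
      · exact Or.inl ⟨h, hi⟩
    · rintro (⟨-, hi⟩ | ⟨j, ⟨hj, hi⟩, rfl⟩)
      · exact hi
      · exact (unhalve_succ_eq_of_closesPair hj).trans hi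
  have hT : T.Finite := (Set.finite_Iio M).subset fun i ⟨hi, _⟩ => by
    have hne := (closesPair_succ.mp hi).2
    by_contra h
    have := hM (i + 1) (by simp only [Set.mem_Iio, not_lt] at h; omega)
    omega
  have hdisj : Disjoint T ((· + 1) '' T) := by
    refine Set.disjoint_left.mpr fun i ⟨hi, _⟩ ⟨j, ⟨hj, _⟩, hji⟩ => ?_
    have := toNat_closesPair_add_succ_le l i
    subst hji
    simp [hi, hj] at this
  rw [hfiber, Set.ncard_union_eq hdisj hT (hT.image _),
    Set.ncard_image_of_injective _ (add_left_injective 1)]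
  exact ⟨_, rfl⟩

end Backward

theorem sumsTo_halve {ν : ℕ → ℕ} (hν : Antitone ν) (ho : OddPartsEvenMult ν) {n : ℕ}
    (h : SumsTo ν n) : SumsTo (halve ν) (n / 2) := by
  obtain ⟨M, hM, hs⟩ := h
  refine ⟨M, fun m hm => halve_eq_zero (hM m hm), ?_⟩
  have := sum_range_unhalve (halve ν) M
  rw [unhalve_halve hν ho, hs, closesPair_eq_false_of_eq_zero (halve_eq_zero (hM M le_rfl)),
    Bool.toNat_false] at this
  omega

end Z1Bij

open Z1Bij in
/-- 3.4(a): for even N, the substitution is a bijection from Z¹_N (partitions of N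
in which every odd part occurs an even number of times) onto BP^{N/2}_{1,1}. -/
theorem Z1_bij_BP11 (N : ℕ) (hN : Even N) :
    Set.BijOn T2
      {ν | IsPartitionSeq ν ∧ SumsTo ν N ∧ OddPartsEvenMult ν}
      {l | IsBipartition l ∧ SumsTo l (N / 2) ∧ HasExcess 1 1 l} := by
  refine ⟨?_, ?_, ?_⟩
  · rintro ν ⟨⟨hz, hdec⟩, hsum, ho⟩
    have hν := antitone_nat_of_succ_le hdec
    rw [Set.mem_ofPred_eq, T2_eq_halve hν ho]
    exact ⟨isBipartition_halve hν hz, sumsTo_halve hν ho hsum, hasExcess_halve hν⟩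
  · rintro ν ⟨⟨-, hdec⟩, -, ho⟩ ν' ⟨⟨-, hdec'⟩, -, ho'⟩ h
    have hν := antitone_nat_of_succ_le hdec
    have hν' := antitone_nat_of_succ_le hdec'
    rw [← unhalve_halve hν ho, ← unhalve_halve hν' ho', ← T2_eq_halve hν ho,
      ← T2_eq_halve hν' ho', h]
  · rintro l ⟨⟨hz, hb⟩, hsum, hex⟩
    have he (i : ℕ) : l (i + 1) ≤ l i + 1 := (Nat.even_or_odd i).elim (hex i).1 (hex i).2
    have hν := antitone_unhalve hb he
    have ho := oddPartsEvenMult_unhalve hz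
    refine ⟨unhalve l,
      ⟨⟨eventuallyZero_unhalve hz, fun i => hν (Nat.le_add_right i 1)⟩, ?_, ho⟩, ?_⟩
    · simpa only [Nat.two_mul_div_two_of_even hN] using sumsTo_unhalve hsum
    · rw [T2_eq_halve hν ho, halve_unhalve]
end

section
/- Let N be an even natural number. The map described below is a bijection from Z²_N onto BP^{N/2}_{2,2}: each string 2a, …, 2a of odd length, or of even length with label 1, is replaced by a, …, a of the same length; each string 2a, …, 2a of even length with label 0 is replaced by a−1, a+1, a−1, a+1, …, a−1, a+1 of the same length; each string 2a+1, …, 2a+1 (necessarily of even length) is replaced by a, a+1, a, a+1, …, a, a+1 of the same length; the resulting entries form a bipartition of N/2 of excess (2,2). -/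
/-- Labels are attached exactly to even positive part values occurring an even
positive number of times; elsewhere the label is (normalized to) false. -/
def LabelOk (ν : ℕ → ℕ) (lab : ℕ → Bool) : Prop :=
  ∀ c, ¬(0 < c ∧ Even c ∧ 0 < ({i | ν i = c}.ncard) ∧ Even ({i | ν i = c}.ncard)) →
    lab c = false

/-- The substitution of 3.4(b): strings 2a,...,2a of odd length or label 1 become
a,...,a; strings 2a,...,2a of even length and label 0 become a-1,a+1,...;
strings 2a+1,...,2a+1 become a,a+1,.... -/
noncomputable def T3 (p : (ℕ → ℕ) × (ℕ → Bool)) : ℕ → ℕ := fun i =>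
  if p.1 i = 0 then 0
  else if p.1 i % 2 = 1 then
    (if (i - strStart p.1 i) % 2 = 0 then p.1 i / 2 else p.1 i / 2 + 1)
  else if Odd (strLen p.1 i) ∨ p.2 (p.1 i) = true then p.1 i / 2
  else if (i - strStart p.1 i) % 2 = 0 then p.1 i / 2 - 1 else p.1 i / 2 + 1


/-!
`T3` acts string by string: a string of `k` parts `v` with label `b` becomes the first `k` terms
of the alternating sequence `x, x + d, x, x + d, …` with `d = blockStep v k b ∈ {0, 1, 2}` and
`v = 2 x + d`. When `d ≠ 0` the string has even length, so its image is a run of pairs summing to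
`v`, and the sum is halved. The image of a string of parts `v` has its entries between
`(v - 1) / 2` and `v / 2 + 1` and starts at most at `v / 2`, which gives the bipartition and excess
conditions.

Conversely, the first string is read off the image `l`: `x = l 0`, `d` is `l 1 - l 0` when this
is `1` or `2` and `0` otherwise, and the string ends where `l` leaves the alternating pattern.
This is exact because the image of the remaining strings starts at most at `(v - 1) / 2` and its
first two terms sum to less than `v`, so it cannot continue the pattern. Injectivity and
surjectivity then follow by strong induction on the largest part, peeling off the first string.
-/

namespace Z2BP

def altSeq (x d j : ℕ) : ℕ := if j % 2 = 0 then x else x + d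

lemma altSeq_le (x d j : ℕ) : altSeq x d j ≤ x + d := by
  unfold altSeq; split_ifs <;> omega

def blockStep (v k : ℕ) (b : Bool) : ℕ :=
  if v % 2 = 1 then 1 else if Odd k ∨ b = true then 0 else 2

def blockVal (v k : ℕ) (b : Bool) : ℕ → ℕ :=
  altSeq ((v - blockStep v k b) / 2) (blockStep v k b)

/-- The conditions on a string of `k` parts `v` with label `b` in an element of `Z²`. -/
def AdmissibleBlock (v k : ℕ) (b : Bool) : Prop :=
  0 < k ∧ (Odd v → Even k) ∧ (b = true → Even v ∧ Even k)

section blockVal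
variable {v k : ℕ} {b : Bool}

lemma blockStep_le : blockStep v k b ≤ 2 := by
  unfold blockStep; split_ifs <;> omega

lemma two_mul_add_blockStep (hv : 0 < v) :
    2 * ((v - blockStep v k b) / 2) + blockStep v k b = v := by
  unfold blockStep; split_ifs <;> omega

lemma blockStep_two_mul_add {x d : ℕ} (hd : d ≤ 2) (hk : d ≠ 0 → Even k) :
    blockStep (2 * x + d) k (decide (d = 0 ∧ Even k)) = d := by
  rcases (show d = 0 ∨ d = 1 ∨ d = 2 by omega) with rfl | rfl | rfl
  · rcases Nat.even_or_odd k with h | h <;> simp [blockStep, h]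
  · simp [blockStep, Nat.add_mod]
  · simp [blockStep, Nat.not_odd_iff_even.2 (hk two_ne_zero)]

lemma AdmissibleBlock.even_of_blockStep_ne_zero (hb : AdmissibleBlock v k b)
    (h : blockStep v k b ≠ 0) : Even k := by
  refine (Nat.even_or_odd k).resolve_right fun hk => h ?_
  have hv : v % 2 ≠ 1 := fun hv => Nat.not_even_iff_odd.2 hk (hb.2.1 (Nat.odd_iff.2 hv))
  simp [blockStep, hv, hk]

lemma AdmissibleBlock.decide_blockStep_eq_zero_and_even (hb : AdmissibleBlock v k b) :
    decide (blockStep v k b = 0 ∧ Even k) = b := by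
  cases b
  · simp only [blockStep, decide_eq_false_iff_not, not_and, Bool.false_eq_true, or_false]
    intro h hk
    split_ifs at h with hv hk'
    exact Nat.not_odd_iff_even.2 hk hk'
  · obtain ⟨hv, hk⟩ := hb.2.2 rfl
    simp [blockStep, Nat.even_iff.1 hv, hk]

lemma blockVal_add_blockVal_succ (hv : 0 < v) (j : ℕ) :
    blockVal v k b j + blockVal v k b (j + 1) = v := by
  have := two_mul_add_blockStep (k := k) (b := b) hv
  unfold blockVal altSeq; split_ifs <;> omega

lemma blockVal_add_two (j : ℕ) : blockVal v k b (j + 2) = blockVal v k b j := by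
  simp [blockVal, altSeq, Nat.add_mod_right]

lemma le_blockVal (hv : 0 < v) (j : ℕ) : (v - 1) / 2 ≤ blockVal v k b j := by
  have := two_mul_add_blockStep (k := k) (b := b) hv
  have : blockStep v k b ≤ 2 := blockStep_le
  unfold blockVal altSeq; split_ifs <;> omega

lemma blockVal_pred_bounds (hv : 0 < v) (hb : AdmissibleBlock v k b) :
    (v - 1) / 2 + 1 ≤ blockVal v k b (k - 1) ∧ blockVal v k b (k - 1) + (v - 1) / 2 ≤ v := by
  have := two_mul_add_blockStep (k := k) (b := b) hv
  have : blockStep v k b ≤ 2 := blockStep_le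
  have hstep : (k - 1) % 2 = 0 → blockStep v k b = 0 := fun hk => by
    by_contra hs
    have := Nat.even_iff.1 (hb.even_of_blockStep_ne_zero hs)
    have := hb.1
    omega
  unfold blockVal altSeq
  split_ifs with hk
  · have := hstep hk
    omega
  · omega

lemma two_mul_sum_blockVal (hv : 0 < v) (hb : AdmissibleBlock v k b) :
    2 * ∑ j ∈ Finset.range k, blockVal v k b j = k * v := by
  by_cases hs : blockStep v k b = 0
  · have h2 := two_mul_add_blockStep (k := k) (b := b) hv
    rw [hs, add_zero] at h2
    simp only [blockVal, altSeq, hs, add_zero, ite_self, Finset.sum_const, Finset.card_range,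
      smul_eq_mul]
    rw [mul_left_comm, h2]
  · obtain ⟨m, hm⟩ := hb.even_of_blockStep_ne_zero hs
    have hpairs : ∀ n, ∑ j ∈ Finset.range (2 * n), blockVal v k b j = n * v := by
      intro n
      induction n with
      | zero => simp
      | succ n ih =>
        rw [show 2 * (n + 1) = 2 * n + 1 + 1 by ring, Finset.sum_range_succ,
          Finset.sum_range_succ, add_assoc, blockVal_add_blockVal_succ hv, ih]
        ring
    rw [show Finset.range k = Finset.range (2 * m) by rw [hm, two_mul], hpairs, hm]
    ring

end blockVal

section T3
variable {p : (ℕ → ℕ) × (ℕ → Bool)} {i : ℕ}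

lemma T3_of_eq_zero (h : p.1 i = 0) : T3 p i = 0 := by simp [T3, h]

lemma T3_eq_blockVal (h : p.1 i ≠ 0) :
    T3 p i = blockVal (p.1 i) (strLen p.1 i) (p.2 (p.1 i)) (i - strStart p.1 i) := by
  unfold T3 blockVal blockStep altSeq
  split_ifs <;> omega

lemma T3_le : T3 p i ≤ p.1 i / 2 + 1 := by
  unfold T3; split_ifs <;> omega

lemma le_T3 : (p.1 i - 1) / 2 ≤ T3 p i := by
  unfold T3; split_ifs <;> omega

lemma T3_zero_le : T3 p 0 ≤ p.1 0 / 2 := by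
  have h : strStart p.1 0 = 0 := Nat.eq_zero_of_le_zero (Nat.sInf_le rfl)
  unfold T3; rw [h]; split_ifs <;> omega

lemma T3_succ_le (h : p.1 (i + 1) ≤ p.1 i) : T3 p (i + 1) ≤ T3 p i + 2 := by
  have h1 : T3 p (i + 1) ≤ p.1 (i + 1) / 2 + 1 := T3_le
  have h2 : (p.1 i - 1) / 2 ≤ T3 p i := le_T3
  omega

end T3

lemma sInf_image_add {S : Set ℕ} (hS : S.Nonempty) (k : ℕ) :
    sInf ((k + ·) '' S) = k + sInf S :=
  IsLeast.csInf_eq ⟨⟨sInf S, Nat.sInf_mem hS, rfl⟩, by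
    rintro _ ⟨s, hs, rfl⟩
    exact Nat.add_le_add_left (Nat.sInf_le hs) k⟩

def prepend (v k : ℕ) (ν : ℕ → ℕ) (i : ℕ) : ℕ := if i < k then v else ν (i - k)

section prepend
variable {v k i : ℕ} {ν : ℕ → ℕ}

lemma prepend_of_lt (h : i < k) : prepend v k ν i = v := if_pos h

@[simp]
lemma prepend_add (v k : ℕ) (ν : ℕ → ℕ) (i : ℕ) : prepend v k ν (k + i) = ν i := by
  simp [prepend]

lemma setOf_prepend_eq_self (hν : ∀ j, ν j ≠ v) : {j | prepend v k ν j = v} = Set.Iio k := by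
  ext j
  simp only [prepend, Set.mem_ofPred_eq, Set.mem_Iio]
  split_ifs with h <;> simp [h, hν]

lemma setOf_prepend_eq_of_ne {c : ℕ} (hc : c ≠ v) :
    {j | prepend v k ν j = c} = (k + ·) '' {j | ν j = c} := by
  ext j
  simp only [prepend, Set.mem_ofPred_eq, Set.mem_image]
  constructor
  · intro h
    split_ifs at h with hj
    · exact absurd h.symm hc
    · exact ⟨j - k, h, by omega⟩
  · rintro ⟨j, hj, rfl⟩
    simpa using hj

lemma ncard_setOf_prepend_eq (hν : ∀ j, ν j ≠ v) (c : ℕ) :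
    {j | prepend v k ν j = c}.ncard = if c = v then k else {j | ν j = c}.ncard := by
  split_ifs with hc
  · rw [hc, setOf_prepend_eq_self hν, Set.ncard_Iio_nat]
  · rw [setOf_prepend_eq_of_ne hc, Set.ncard_image_of_injective _ (add_right_injective k)]

lemma strLen_prepend_of_lt (hν : ∀ j, ν j ≠ v) (h : i < k) : strLen (prepend v k ν) i = k := by
  rw [strLen, prepend_of_lt h, ncard_setOf_prepend_eq hν, if_pos rfl]

lemma strStart_prepend_of_lt (h : i < k) : strStart (prepend v k ν) i = 0 :=
  Nat.eq_zero_of_le_zero <| Nat.sInf_le <| by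
    simp [prepend_of_lt h, prepend_of_lt (i.zero_le.trans_lt h)]

lemma strLen_prepend_add (hν : ∀ j, ν j ≠ v) (i : ℕ) :
    strLen (prepend v k ν) (k + i) = strLen ν i := by
  rw [strLen, prepend_add, ncard_setOf_prepend_eq hν, if_neg (hν i), strLen]

lemma strStart_prepend_add (hν : ∀ j, ν j ≠ v) (i : ℕ) :
    strStart (prepend v k ν) (k + i) = k + strStart ν i := by
  rw [strStart, prepend_add, setOf_prepend_eq_of_ne (hν i),
    sInf_image_add (S := {j | ν j = ν i}) ⟨i, rfl⟩, strStart]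

lemma isPartitionSeq_prepend (hν : IsPartitionSeq ν) (hv : ν 0 ≤ v) :
    IsPartitionSeq (prepend v k ν) := by
  obtain ⟨⟨N, hN⟩, hmono⟩ := hν
  refine ⟨⟨k + N, fun m hm => ?_⟩, fun j => ?_⟩
  · rw [prepend, if_neg (by omega)]
    exact hN _ (by omega)
  · unfold prepend
    split_ifs with h1 h2 h2
    · rfl
    · omega
    · exact (antitone_nat_of_succ_le hmono (Nat.zero_le _)).trans hv
    · rw [show j + 1 - k = j - k + 1 by omega]
      exact hmono _

end prepend

def consBlock (v k : ℕ) (b : Bool) (p : (ℕ → ℕ) × (ℕ → Bool)) : (ℕ → ℕ) × (ℕ → Bool) :=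
  (prepend v k p.1, Function.update p.2 v b)

section consBlock
variable {v k i : ℕ} {b : Bool} {p : (ℕ → ℕ) × (ℕ → Bool)}

lemma consBlock_fst_zero (hb : AdmissibleBlock v k b) : (consBlock v k b p).1 0 = v :=
  prepend_of_lt hb.1

lemma T3_consBlock_of_lt (hv : v ≠ 0) (hp : ∀ j, p.1 j ≠ v) (h : i < k) :
    T3 (consBlock v k b p) i = blockVal v k b i := by
  rw [T3_eq_blockVal (by simpa [consBlock, prepend_of_lt h] using hv)]
  simp only [consBlock, prepend_of_lt h, strLen_prepend_of_lt hp h, strStart_prepend_of_lt h,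
    Function.update_self, Nat.sub_zero]

lemma T3_consBlock_add (hp : ∀ j, p.1 j ≠ v) (i : ℕ) :
    T3 (consBlock v k b p) (k + i) = T3 p i := by
  by_cases h0 : p.1 i = 0
  · rw [T3_of_eq_zero h0, T3_of_eq_zero (by simpa [consBlock] using h0)]
  rw [T3_eq_blockVal h0, T3_eq_blockVal (by simpa [consBlock] using h0)]
  simp only [consBlock, prepend_add, strLen_prepend_add hp, strStart_prepend_add hp,
    Function.update_of_ne (hp i), Nat.add_sub_add_left]

end consBlock

def IsZ2 (p : (ℕ → ℕ) × (ℕ → Bool)) : Prop :=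
  IsPartitionSeq p.1 ∧ OddPartsEvenMult p.1 ∧ LabelOk p.1 p.2

def nil : (ℕ → ℕ) × (ℕ → Bool) := (fun _ => 0, fun _ => false)

section IsZ2
variable {v k : ℕ} {b : Bool} {ν : ℕ → ℕ} {p : (ℕ → ℕ) × (ℕ → Bool)}

lemma IsPartitionSeq.apply_lt (hν : IsPartitionSeq ν) (hv : ν 0 < v) (j : ℕ) : ν j < v :=
  (antitone_nat_of_succ_le hν.2 j.zero_le).trans_lt hv

lemma IsPartitionSeq.exists_eq_apply_zero_iff_lt (hν : IsPartitionSeq ν) (h0 : 0 < ν 0) :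
    ∃ k, ∀ j, ν j = ν 0 ↔ j < k := by
  obtain ⟨⟨N, hN⟩, hmono⟩ := hν
  have hanti := antitone_nat_of_succ_le hmono
  have hdrop : {j | ν j < ν 0}.Nonempty := ⟨N, by simp [hN N le_rfl, h0]⟩
  have hk : ν (sInf {j | ν j < ν 0}) < ν 0 := Nat.sInf_mem hdrop
  refine ⟨sInf {j | ν j < ν 0}, fun j => ⟨fun h => lt_of_not_ge fun hj => ?_, fun h => ?_⟩⟩
  · exact ((hanti hj).trans_lt hk).ne h
  · exact le_antisymm (hanti j.zero_le)
      (not_lt.1 (Nat.notMem_of_lt_sInf (s := {j | ν j < ν 0}) h))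

lemma IsZ2.fst_ne (hp : IsZ2 p) (hlt : p.1 0 < v) (j : ℕ) : p.1 j ≠ v :=
  (IsPartitionSeq.apply_lt hp.1 hlt j).ne

lemma isZ2_nil : IsZ2 nil :=
  ⟨⟨⟨0, fun _ _ => rfl⟩, fun _ => le_rfl⟩,
    fun c hc => by simp [nil, show 0 ≠ c by rintro rfl; simp at hc], fun _ _ => rfl⟩

lemma isZ2_consBlock (hp : IsZ2 p) (hv : p.1 0 < v) (hb : AdmissibleBlock v k b) :
    IsZ2 (consBlock v k b p) := by
  have hne := hp.fst_ne hv
  obtain ⟨hpart, hodd, hlab⟩ := hp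
  refine ⟨isPartitionSeq_prepend hpart hv.le, fun c hc => ?_, fun c hc => ?_⟩ <;>
    simp only [consBlock, ncard_setOf_prepend_eq hne] at hc ⊢
  · split_ifs with hcv
    · exact hb.2.1 (hcv ▸ hc)
    · exact hodd c hc
  · by_cases hcv : c = v
    · subst hcv
      rw [if_pos rfl] at hc
      rw [Function.update_self, Bool.eq_false_iff]
      exact fun hb' => hc ⟨by omega, (hb.2.2 hb').1, hb.1, (hb.2.2 hb').2⟩
    · rw [if_neg hcv] at hc
      rw [Function.update_of_ne hcv]
      exact hlab c hc

lemma IsZ2.eq_nil (hp : IsZ2 p) (h0 : p.1 0 = 0) : p = nil := by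
  obtain ⟨hpart, -, hlab⟩ := hp
  have hzero : ∀ i, p.1 i = 0 := fun i =>
    Nat.eq_zero_of_le_zero (h0 ▸ antitone_nat_of_succ_le hpart.2 i.zero_le)
  refine Prod.ext (funext hzero) (funext fun c => hlab c fun hc => ?_)
  have hempty : {i | p.1 i = c} = ∅ := Set.eq_empty_of_forall_notMem fun i hi => by
    simp only [Set.mem_ofPred_eq, hzero] at hi
    omega
  simp [hempty] at hc

lemma IsPartitionSeq.of_prepend (h : IsPartitionSeq (prepend v k ν)) : IsPartitionSeq ν := by
  obtain ⟨⟨N, hN⟩, hmono⟩ := h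
  exact ⟨⟨N, fun m hm => by simpa using hN (k + m) (by omega)⟩,
    fun j => by simpa [add_assoc] using hmono (k + j)⟩

lemma IsZ2.of_consBlock (hp : IsZ2 (consBlock v k b p)) (hne : ∀ j, p.1 j ≠ v)
    (hlab : p.2 v = false) : IsZ2 p := by
  obtain ⟨hpart, hodd, hlab'⟩ := hp
  have hmult (c : ℕ) (hc : c ≠ v) :
      {j | (consBlock v k b p).1 j = c}.ncard = {j | p.1 j = c}.ncard := by
    simp only [consBlock]
    rw [ncard_setOf_prepend_eq hne, if_neg hc]
  refine ⟨IsPartitionSeq.of_prepend hpart, fun c hc => ?_, fun c hc => ?_⟩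
  · by_cases hcv : c = v
    · simp [hcv, hne]
    · exact hmult c hcv ▸ hodd c hc
  · by_cases hcv : c = v
    · exact hcv ▸ hlab
    · simpa [consBlock, Function.update_of_ne hcv] using hlab' c (hmult c hcv ▸ hc)

lemma IsZ2.admissibleBlock_of_consBlock (hp : IsZ2 (consBlock v k b p)) (hne : ∀ j, p.1 j ≠ v)
    (hk : 0 < k) : AdmissibleBlock v k b := by
  obtain ⟨-, hodd, hlab⟩ := hp
  have hkv : {j | (consBlock v k b p).1 j = v}.ncard = k := by
    simp only [consBlock]
    rw [ncard_setOf_prepend_eq hne, if_pos rfl]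
  refine ⟨hk, fun hvo => hkv ▸ hodd v hvo, fun hb => ?_⟩
  by_contra hev
  have := hlab v fun h => hev ⟨h.2.1, hkv ▸ h.2.2.2⟩
  simp [consBlock, hb] at this

lemma IsZ2.exists_eq_consBlock (hp : IsZ2 p) (h0 : 0 < p.1 0) :
    ∃ v k b p', IsZ2 p' ∧ p'.1 0 < v ∧ AdmissibleBlock v k b ∧ p = consBlock v k b p' := by
  obtain ⟨k, hk⟩ := IsPartitionSeq.exists_eq_apply_zero_iff_lt hp.1 h0
  have hanti := antitone_nat_of_succ_le hp.1.2
  set v := p.1 0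
  set p' : (ℕ → ℕ) × (ℕ → Bool) := (fun i => p.1 (k + i), Function.update p.2 v false)
  have hne : ∀ j, p'.1 j ≠ v := fun j h => by have := (hk _).1 h; omega
  have hcons : p = consBlock v k (p.2 v) p' := by
    refine Prod.ext (funext fun i => ?_) (by simp [consBlock, p'])
    simp only [consBlock, prepend, p']
    split_ifs with hi
    · exact (hk i).2 hi
    · rw [Nat.add_sub_cancel' (not_lt.1 hi)]
  have hp' : IsZ2 (consBlock v k (p.2 v) p') := hcons ▸ hp
  exact ⟨v, k, p.2 v, p', hp'.of_consBlock hne (by simp [p']),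
    (hne 0).lt_of_le (hanti (k + 0).zero_le),
    hp'.admissibleBlock_of_consBlock hne ((hk 0).1 rfl), hcons⟩

@[elab_as_elim]
theorem IsZ2.induction {P : (p : (ℕ → ℕ) × (ℕ → Bool)) → IsZ2 p → Prop} (nil : P nil isZ2_nil)
    (cons : ∀ v k b p (hp : IsZ2 p) (hlt : p.1 0 < v) (hb : AdmissibleBlock v k b), P p hp →
      P (consBlock v k b p) (isZ2_consBlock hp hlt hb))
    (hp : IsZ2 p) : P p hp := by
  induction h : p.1 0 using Nat.strong_induction_on generalizing p with
  | _ n ih =>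
    rcases Nat.eq_zero_or_pos n with rfl | hn
    · obtain rfl := hp.eq_nil h
      exact nil
    · obtain ⟨v, k, b, p', hp', hlt, hb, rfl⟩ := hp.exists_eq_consBlock (h ▸ hn)
      rw [consBlock_fst_zero hb] at h
      exact cons _ _ _ _ hp' hlt hb (ih _ (h ▸ hlt) hp' rfl)

end IsZ2

lemma T3_nil : T3 nil = 0 := funext fun _ => T3_of_eq_zero rfl

section T3
variable {p : (ℕ → ℕ) × (ℕ → Bool)}

lemma IsZ2.T3_add_T3_succ_le (hp : IsZ2 p) : ∀ i, T3 p i + T3 p (i + 1) ≤ p.1 i := by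
  induction hp using IsZ2.induction with
  | nil => simp [T3_nil]
  | cons v k b p hp hlt hb ih =>
    intro i
    have hv : 0 < v := by omega
    have hne := hp.fst_ne hlt
    rcases lt_or_ge i k with hi | hi
    · rw [T3_consBlock_of_lt hv.ne' hne hi]
      change _ ≤ prepend v k p.1 i
      rw [prepend_of_lt hi]
      rcases (show i + 1 ≤ k from hi).lt_or_eq with hi' | hi'
      · rw [T3_consBlock_of_lt hv.ne' hne hi', blockVal_add_blockVal_succ hv]
      · have hk : T3 (consBlock v k b p) (i + 1) = T3 p 0 := by
          rw [hi']
          simpa using T3_consBlock_add (k := k) (b := b) hne 0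
        have := T3_zero_le (p := p)
        have := (blockVal_pred_bounds hv hb).2
        rw [hk, show i = k - 1 by omega]
        omega
    · obtain ⟨j, rfl⟩ := Nat.exists_eq_add_of_le hi
      rw [T3_consBlock_add hne, add_assoc, T3_consBlock_add hne]
      simpa [consBlock] using ih j

lemma IsZ2.T3_add_two_le (hp : IsZ2 p) : ∀ i, T3 p (i + 2) ≤ T3 p i := by
  induction hp using IsZ2.induction with
  | nil => simp [T3_nil]
  | cons v k b p hp hlt hb ih =>
    intro i
    have hv : 0 < v := by omega
    have hne := hp.fst_ne hlt
    rcases lt_or_ge i k with hi | hi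
    · rw [T3_consBlock_of_lt hv.ne' hne hi]
      by_cases hi2 : i + 2 < k
      · rw [T3_consBlock_of_lt hv.ne' hne hi2, blockVal_add_two]
      obtain ⟨j, hj⟩ : ∃ j, i + 2 = k + j := ⟨i + 2 - k, by omega⟩
      rw [hj, T3_consBlock_add hne]
      have h1 := IsPartitionSeq.apply_lt hp.1 hlt 1
      rcases (show j = 0 ∨ j = 1 by omega) with rfl | rfl
      · exact (T3_zero_le.trans (by omega)).trans (le_blockVal hv i)
      · have := (blockVal_pred_bounds hv hb).1
        rw [show i = k - 1 by omega]
        exact T3_le.trans (by omega)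
    · obtain ⟨j, rfl⟩ := Nat.exists_eq_add_of_le hi
      rw [add_assoc, T3_consBlock_add hne, T3_consBlock_add hne]
      exact ih j

lemma IsZ2.two_mul_sum_T3 (hp : IsZ2 p) :
    ∀ M, (∀ j ≥ M, p.1 j = 0) →
      2 * ∑ j ∈ Finset.range M, T3 p j = ∑ j ∈ Finset.range M, p.1 j := by
  induction hp using IsZ2.induction with
  | nil => simp only [T3_nil]; simp [nil]
  | cons v k b p hp hlt hb ih =>
    intro M hM
    have hv : 0 < v := by omega
    have hne := hp.fst_ne hlt
    have hkM : k ≤ M := not_lt.1 fun h => by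
      have := hM M le_rfl
      simp [consBlock, prepend_of_lt h] at this
      omega
    obtain ⟨M, rfl⟩ := Nat.exists_eq_add_of_le hkM
    have hblock : ∑ j ∈ Finset.range k, T3 (consBlock v k b p) j =
        ∑ j ∈ Finset.range k, blockVal v k b j :=
      Finset.sum_congr rfl fun j hj => T3_consBlock_of_lt hv.ne' hne (Finset.mem_range.1 hj)
    have hconst : ∑ j ∈ Finset.range k, (consBlock v k b p).1 j = k * v := by
      simp only [consBlock]
      rw [Finset.sum_congr rfl fun j hj => prepend_of_lt (Finset.mem_range.1 hj)]
      simp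
    simp only [Finset.sum_range_add, T3_consBlock_add hne, hblock, hconst, mul_add,
      two_mul_sum_blockVal hv hb]
    simp only [consBlock, prepend_add]
    rw [ih M fun j hj => by simpa [consBlock] using hM (k + j) (by omega)]

end T3

lemma SumsTo.sum_range_eq {l : ℕ → ℕ} {n M : ℕ} (h : SumsTo l n) (hM : ∀ j ≥ M, l j = 0) :
    ∑ j ∈ Finset.range M, l j = n := by
  obtain ⟨N, hN, rfl⟩ := h
  rw [← Finset.eventually_constant_sum hM (le_max_left M N),
    Finset.eventually_constant_sum hN (le_max_right M N)]

def headStep (l : ℕ → ℕ) : ℕ := if l 1 = l 0 + 2 then 2 else if l 1 = l 0 + 1 then 1 else 0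

def headVal (l : ℕ → ℕ) : ℕ := 2 * l 0 + headStep l

noncomputable def headBreak (l : ℕ → ℕ) : ℕ := sInf {j | l j ≠ altSeq (l 0) (headStep l) j}

/-- When `headStep l ≠ 0`, the alternating pattern may run one term into the next string. -/
noncomputable def headLen (l : ℕ → ℕ) : ℕ :=
  if headStep l = 0 then headBreak l else 2 * (headBreak l / 2)

noncomputable def headLabel (l : ℕ → ℕ) : Bool := decide (headStep l = 0 ∧ Even (headLen l))

section head
variable {l : ℕ → ℕ} {v k m : ℕ} {b : Bool}

lemma headStep_cases (l : ℕ → ℕ) :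
    headStep l = 2 ∧ l 1 = l 0 + 2 ∨ headStep l = 1 ∧ l 1 = l 0 + 1 ∨
      headStep l = 0 ∧ l 1 ≠ l 0 + 2 ∧ l 1 ≠ l 0 + 1 := by
  unfold headStep
  split_ifs <;> simp_all

lemma headBreak_eq (hpre : ∀ j < m, l j = altSeq (l 0) (headStep l) j)
    (hm : l m ≠ altSeq (l 0) (headStep l) m) : headBreak l = m :=
  IsLeast.csInf_eq ⟨hm, fun _ hj => not_lt.1 fun h => hj (hpre _ h)⟩

lemma headBreak_spec (hz : EventuallyZero l) (h : headVal l ≠ 0) :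
    (∀ j < headBreak l, l j = altSeq (l 0) (headStep l) j) ∧
      l (headBreak l) ≠ altSeq (l 0) (headStep l) (headBreak l) := by
  obtain ⟨N, hN⟩ := hz
  have hpos : l 0 + headStep l ≠ 0 := by
    unfold headVal at h
    omega
  have hne : {j | l j ≠ altSeq (l 0) (headStep l) j}.Nonempty :=
    ⟨2 * N + 1, by simp [altSeq, hN (2 * N + 1) (by omega), Nat.add_mod, Ne.symm hpos]⟩
  exact ⟨fun j hj => not_not.1 (Nat.notMem_of_lt_sInf hj), Nat.sInf_mem hne⟩

lemma headLen_bounds (hz : EventuallyZero l) (h : headVal l ≠ 0) :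
    0 < headLen l ∧ headLen l ≤ headBreak l ∧ (headStep l = 0 → headLen l = headBreak l) ∧
      (headStep l ≠ 0 → headLen l % 2 = 0 ∧ headBreak l ≤ headLen l + 1) := by
  obtain ⟨-, hbrk⟩ := headBreak_spec hz h
  have h1 : headBreak l ≠ 0 := fun h0 => hbrk (by simp [h0, altSeq])
  have h2 : headStep l ≠ 0 → headBreak l ≠ 1 := fun hd h1 => hbrk <| by
    have := headStep_cases l
    simp only [h1, altSeq, Nat.one_mod, one_ne_zero, if_false]
    omega
  unfold headLen
  split_ifs with hd <;> omega

lemma headLen_break (hz : EventuallyZero l) (h : headVal l ≠ 0) :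
    l (headLen l) ≠ l 0 ∨ headStep l ≠ 0 ∧ l (headLen l + 1) ≠ l 0 + headStep l := by
  obtain ⟨-, hbrk⟩ := headBreak_spec hz h
  obtain ⟨-, hkn, hk_eq, hk_even⟩ := headLen_bounds hz h
  by_cases hd : headStep l = 0
  · rw [← hk_eq hd] at hbrk
    exact Or.inl (by simpa [altSeq, hd] using hbrk)
  obtain ⟨hkev, hkn'⟩ := hk_even hd
  rcases (show headBreak l = headLen l ∨ headBreak l = headLen l + 1 by omega) with hn | hn
  · rw [hn] at hbrk
    exact Or.inl (by simpa [altSeq, hkev] using hbrk)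
  · rw [hn] at hbrk
    exact Or.inr ⟨hd, by simpa [altSeq, show (headLen l + 1) % 2 = 1 by omega] using hbrk⟩

lemma headLen_eq (hpre : ∀ j < k, l j = altSeq (l 0) (headStep l) j)
    (hk : headStep l ≠ 0 → k % 2 = 0)
    (hbreak : l k ≠ l 0 ∨ headStep l ≠ 0 ∧ l (k + 1) ≠ l 0 + headStep l) : headLen l = k := by
  by_cases hd : headStep l = 0
  · have hlk : l k ≠ l 0 := hbreak.resolve_right fun h => h.1 hd
    rw [headLen, if_pos hd, headBreak_eq hpre (by simpa [altSeq, hd] using hlk)]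
  have hk2 := hk hd
  rw [headLen, if_neg hd]
  by_cases hlk : l k = l 0
  · have hk1 := (hbreak.resolve_left (not_not.2 hlk)).2
    rw [headBreak_eq (m := k + 1)]
    · omega
    · intro j hj
      rcases (show j < k ∨ j = k by omega) with hj | rfl
      · exact hpre j hj
      · simpa [altSeq, hk2] using hlk
    · simpa [altSeq, show (k + 1) % 2 = 1 by omega] using hk1
  · rw [headBreak_eq hpre (by simpa [altSeq, hk2] using hlk)]
    omega

lemma head_eq_of_blockVal (hv : 0 < v) (hb : AdmissibleBlock v k b)
    (hpre : ∀ j < k, l j = blockVal v k b j) (hk : l k ≤ (v - 1) / 2)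
    (hk1 : l k + l (k + 1) < v) :
    headVal l = v ∧ headLen l = k ∧ headLabel l = b := by
  set s := blockStep v k b
  set x := (v - s) / 2
  have hvx : 2 * x + s = v := two_mul_add_blockStep hv
  have hs2 : s ≤ 2 := blockStep_le
  have heven : s ≠ 0 → Even k := hb.even_of_blockStep_ne_zero
  have hl0 : l 0 = x := hpre 0 hb.1
  have hstep : headStep l = s := by
    by_cases hk2 : 1 < k
    · have : l 1 = x + s := hpre 1 hk2
      unfold headStep; split_ifs <;> omega
    · obtain rfl : k = 1 := by have := hb.1; omega
      have : s = 0 := by_contra fun h => by simpa using heven h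
      unfold headStep; split_ifs <;> omega
  have hlen : headLen l = k := by
    refine headLen_eq (by rw [hl0, hstep]; exact hpre)
      (fun hd => Nat.even_iff.1 (heven (hstep ▸ hd))) ?_
    rw [hl0, hstep]
    by_cases hlk : l k = x
    · exact Or.inr ⟨by omega, by omega⟩
    · exact Or.inl hlk
  refine ⟨by rw [headVal, hl0, hstep, hvx], hlen, ?_⟩
  rw [headLabel, hlen, hstep]
  exact hb.decide_blockStep_eq_zero_and_even

lemma admissibleBlock_head (hz : EventuallyZero l) (h : headVal l ≠ 0) :
    AdmissibleBlock (headVal l) (headLen l) (headLabel l) := by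
  obtain ⟨hk0, -, -, hk_even⟩ := headLen_bounds hz h
  refine ⟨hk0, fun hodd => Nat.even_iff.2 (hk_even fun hd => ?_).1, fun hb => ?_⟩
  · rw [headVal, hd, add_zero] at hodd
    exact Nat.not_even_iff_odd.2 hodd (even_two_mul _)
  · simp only [headLabel, decide_eq_true_eq] at hb
    simp [headVal, hb.1, hb.2]

lemma eq_blockVal_head (hz : EventuallyZero l) (h : headVal l ≠ 0) :
    ∀ j < headLen l, l j = blockVal (headVal l) (headLen l) (headLabel l) j := by
  obtain ⟨hpre, -⟩ := headBreak_spec hz h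
  obtain ⟨-, hkn, -, hk_even⟩ := headLen_bounds hz h
  have hstep : blockStep (headVal l) (headLen l) (headLabel l) = headStep l :=
    blockStep_two_mul_add (by have := headStep_cases l; omega)
      fun hd => Nat.even_iff.2 (hk_even hd).1
  intro j hj
  rw [blockVal, hstep, headVal, Nat.add_sub_cancel, Nat.mul_div_cancel_left _ two_pos]
  exact hpre j (by omega)

end head

section T3
variable {v k : ℕ} {b : Bool} {p : (ℕ → ℕ) × (ℕ → Bool)}

lemma IsZ2.head_T3_consBlock (hp : IsZ2 p) (hlt : p.1 0 < v) (hb : AdmissibleBlock v k b) :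
    headVal (T3 (consBlock v k b p)) = v ∧ headLen (T3 (consBlock v k b p)) = k ∧
      headLabel (T3 (consBlock v k b p)) = b := by
  have hv : 0 < v := by omega
  have hne := hp.fst_ne hlt
  have h0 : T3 (consBlock v k b p) k = T3 p 0 := by
    simpa using T3_consBlock_add (k := k) (b := b) hne 0
  have h1 : T3 (consBlock v k b p) (k + 1) = T3 p 1 := T3_consBlock_add hne 1
  refine head_eq_of_blockVal hv hb (fun j hj => T3_consBlock_of_lt hv.ne' hne hj) ?_ ?_
  · rw [h0]
    exact T3_zero_le.trans (by omega)
  · rw [h0, h1]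
    exact (hp.T3_add_T3_succ_le 0).trans_lt hlt

lemma IsZ2.headVal_T3 (hp : IsZ2 p) : headVal (T3 p) = p.1 0 := by
  rcases Nat.eq_zero_or_pos (p.1 0) with h0 | h0
  · rw [hp.eq_nil h0, T3_nil]
    rfl
  · obtain ⟨v, k, b, p', hp', hlt, hb, rfl⟩ := hp.exists_eq_consBlock h0
    rw [(hp'.head_T3_consBlock hlt hb).1, consBlock_fst_zero hb]

end T3

theorem injOn_T3 : Set.InjOn T3 {p | IsZ2 p} := by
  intro p hp q hq hpq
  induction hp using IsZ2.induction generalizing q with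
  | nil => exact (hq.eq_nil (by rw [← hq.headVal_T3, ← hpq, isZ2_nil.headVal_T3]; rfl)).symm
  | cons v k b p hp hlt hb ih =>
    have hq0 : q.1 0 = v := by rw [← hq.headVal_T3, ← hpq, (hp.head_T3_consBlock hlt hb).1]
    obtain ⟨v', k', b', q', hq', hlt', hb', rfl⟩ := hq.exists_eq_consBlock (by omega)
    obtain ⟨hv, hk, hlab⟩ := hp.head_T3_consBlock hlt hb
    obtain ⟨hv', hk', hlab'⟩ := hq'.head_T3_consBlock hlt' hb'
    rw [hpq] at hv hk hlab
    obtain ⟨rfl, rfl, rfl⟩ : v = v' ∧ k = k' ∧ b = b' :=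
      ⟨hv.symm.trans hv', hk.symm.trans hk', hlab.symm.trans hlab'⟩
    rw [ih hq' (funext fun i => by
      rw [← T3_consBlock_add (k := k) (b := b) (hp.fst_ne hlt), hpq,
        T3_consBlock_add (hq'.fst_ne hlt')])]

def IsBP22 (l : ℕ → ℕ) : Prop := IsBipartition l ∧ ∀ i, l (i + 1) ≤ l i + 2

lemma hasExcess_self_iff {e : ℕ} {l : ℕ → ℕ} : HasExcess e e l ↔ ∀ i, l (i + 1) ≤ l i + e :=
  ⟨fun h i => (Nat.even_or_odd i).elim (h i).1 (h i).2, fun h i => ⟨fun _ => h i, fun _ => h i⟩⟩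

section IsBP22
variable {l : ℕ → ℕ}

lemma IsBP22.shift (hl : IsBP22 l) (k : ℕ) : IsBP22 (fun i => l (k + i)) := by
  obtain ⟨⟨⟨N, hN⟩, hbip⟩, hexc⟩ := hl
  exact ⟨⟨⟨N, fun m hm => hN _ (by omega)⟩, fun i => hbip (k + i)⟩, fun i => hexc (k + i)⟩

lemma IsBP22.eq_zero (hl : IsBP22 l) (h : headVal l = 0) : l = 0 := by
  have h01 : l 0 = 0 ∧ l 1 = 0 := by
    have : l 1 ≤ l 0 + 2 := hl.2 0
    have := headStep_cases l
    unfold headVal at h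
    omega
  have key : ∀ n, l n = 0 ∧ l (n + 1) = 0 := fun n => by
    induction n with
    | zero => exact h01
    | succ n ih => exact ⟨ih.2, Nat.eq_zero_of_le_zero (ih.1 ▸ hl.1.2 n)⟩
  exact funext fun n => (key n).1

lemma IsBP22.apply_headLen_le (hl : IsBP22 l) (h : headVal l ≠ 0) :
    l (headLen l) ≤ l 0 ∧ l (headLen l + 1) ≤ l 0 + headStep l := by
  obtain ⟨hpre, -⟩ := headBreak_spec hl.1.1 h
  obtain ⟨hk0, hkn, -, hk_even⟩ := headLen_bounds hl.1.1 h
  have hbip : ∀ i, l (i + 2) ≤ l i := hl.1.2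
  set k := headLen l
  refine ⟨?_, ?_⟩
  · rcases (show k = 1 ∨ 2 ≤ k by omega) with hk1 | hk2
    · have hd : headStep l = 0 := by
        by_contra hd
        have := (hk_even hd).1
        omega
      have := headStep_cases l
      have : l 1 ≤ l 0 + 2 := hl.2 0
      rw [hk1]
      omega
    · have hstart : altSeq (l 0) (headStep l) (k - 2) = l 0 := by
        rcases Nat.eq_zero_or_pos (headStep l) with hd | hd
        · simp [altSeq, hd]
        · have := (hk_even hd.ne').1
          simp [altSeq, show (k - 2) % 2 = 0 by omega]
      have := hbip (k - 2)
      rw [Nat.sub_add_cancel hk2, hpre (k - 2) (by omega), hstart] at this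
      exact this
  · have := hbip (k - 1)
    rw [show k - 1 + 2 = k + 1 by omega, hpre (k - 1) (by omega)] at this
    exact this.trans (altSeq_le _ _ _)

lemma IsBP22.headVal_shift_lt (hl : IsBP22 l) (h : headVal l ≠ 0) :
    headVal (fun i => l (headLen l + i)) < headVal l := by
  have hnext := hl.apply_headLen_le h
  have hbreak := headLen_break hl.1.1 h
  have := headStep_cases (fun i => l (headLen l + i))
  simp only [add_zero] at this
  simp only [headVal, add_zero]
  omega

theorem IsBP22.exists_T3_eq (hl : IsBP22 l) : ∃ p, IsZ2 p ∧ T3 p = l := by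
  induction h : headVal l using Nat.strong_induction_on generalizing l with
  | _ n ih =>
    rcases Nat.eq_zero_or_pos n with rfl | hn
    · exact ⟨nil, isZ2_nil, by rw [T3_nil, hl.eq_zero h]⟩
    have hlt := hl.headVal_shift_lt (by omega)
    obtain ⟨p, hp, hT⟩ := ih _ (h ▸ hlt) (hl.shift (headLen l)) rfl
    have hp0 : p.1 0 < headVal l := by rwa [← hp.headVal_T3, hT]
    have hne := hp.fst_ne hp0
    refine ⟨consBlock (headVal l) (headLen l) (headLabel l) p,
      isZ2_consBlock hp hp0 (admissibleBlock_head hl.1.1 (by omega)), funext fun i => ?_⟩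
    rcases lt_or_ge i (headLen l) with hi | hi
    · rw [T3_consBlock_of_lt (by omega) hne hi, eq_blockVal_head hl.1.1 (by omega) i hi]
    · obtain ⟨j, rfl⟩ := Nat.exists_eq_add_of_le hi
      rw [T3_consBlock_add hne, hT]

end IsBP22

end Z2BP

/-- 3.4(b): for even N, the substitution is a bijection from Z²_N (labelled
partitions) onto BP^{N/2}_{2,2}. -/
theorem Z2_bij_BP22 (N : ℕ) (hN : Even N) :
    Set.BijOn T3
      {p : (ℕ → ℕ) × (ℕ → Bool) |
        IsPartitionSeq p.1 ∧ SumsTo p.1 N ∧ OddPartsEvenMult p.1 ∧ LabelOk p.1 p.2}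
      {l | IsBipartition l ∧ SumsTo l (N / 2) ∧ HasExcess 2 2 l} := by
  refine ⟨?_, Z2BP.injOn_T3.mono fun p hp => (⟨hp.1, hp.2.2⟩ : Z2BP.IsZ2 p), ?_⟩
  · rintro p ⟨hpart, ⟨M, hM, hsum⟩, hodd, hlab⟩
    have hp : Z2BP.IsZ2 p := ⟨hpart, hodd, hlab⟩
    have hT : ∀ m ≥ M, T3 p m = 0 := fun m hm => Z2BP.T3_of_eq_zero (hM m hm)
    refine ⟨⟨⟨M, hT⟩, hp.T3_add_two_le⟩, ⟨M, hT, ?_⟩,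
      Z2BP.hasExcess_self_iff.2 fun i => Z2BP.T3_succ_le (hpart.2 i)⟩
    have := hp.two_mul_sum_T3 M hM
    omega
  · rintro l ⟨hbip, hsum, hexc⟩
    obtain ⟨p, hp, rfl⟩ := Z2BP.IsBP22.exists_T3_eq ⟨hbip, Z2BP.hasExcess_self_iff.1 hexc⟩
    obtain ⟨M, hM⟩ := hp.1.1
    refine ⟨p, ⟨hp.1, ⟨M, hM, ?_⟩, hp.2.1, hp.2.2⟩, rfl⟩
    have h1 := hp.two_mul_sum_T3 M hM
    have h2 := Z2BP.SumsTo.sum_range_eq hsum fun j hj => Z2BP.T3_of_eq_zero (hM j hj)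
    obtain ⟨t, rfl⟩ := hN
    omega
end

section
/- Let N be an odd natural number. The following map is a bijection from 'Z¹_N onto BP^{(N−1)/2}_{2,0}: each string 2a, …, 2a of ν (necessarily of even length) is replaced by a−1, a+1, …, a−1, a+1 of the same length if the string has odd origin, and by a, a, …, a of the same length if it has even origin; each string 2a+1, …, 2a+1 is replaced by a, a+1, a, a+1, … of the same length if it has odd origin, and by a+1, a, a+1, a, … of the same length if it has even origin. -/
/-- The substitution of 3.6(a).  A string has odd origin iff its 1-based starting
index is odd, i.e. its 0-based start strStart is even. -/
noncomputable def T4 (ν : ℕ → ℕ) : ℕ → ℕ := fun i =>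
  if ν i = 0 then 0
  else if ν i % 2 = 0 then
    (if strStart ν i % 2 = 0 then
      (if (i - strStart ν i) % 2 = 0 then ν i / 2 - 1 else ν i / 2 + 1)
     else ν i / 2)
  else
    (if strStart ν i % 2 = 0 then
      (if (i - strStart ν i) % 2 = 0 then ν i / 2 else ν i / 2 + 1)
     else
      (if (i - strStart ν i) % 2 = 0 then ν i / 2 + 1 else ν i / 2))

/-!
A partition in 'Z¹ is a first string `c, …, c` of length `m` (even when `c` is even) followed by
a partition in 'Z¹ with smaller parts, and its image is the pattern of `c` on the first `m`
positions followed by the image of the rest, read with all parities shifted by `m`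
(`T4Shift`). Each part of the theorem then goes by strong induction on the largest part.
A string of `c` of length `m` contributes half of `c m`, up to the parities at its two ends,
which gives the size. The first two values of the image determine the first part, except
that parts `0` and `1` can only be told apart by the sum; and for `c ≥ 2` a string of `c`
cannot be prolonged without changing the image, which gives injectivity. Conversely, the first
two values `a, b` of a bipartition of excess `(2, 0)` force the first part (`leadPart`), the
longest prefix following its pattern (made even for even parts) is the string, and the rest
has a smaller first part, which gives surjectivity.
-/

open Finset

/-- The value `T4` gives to a part `c` at a position of parity `e` (`0` for the paper's odd
positions) in a string whose origin has parity `q`. -/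
def runEntry (c e q : ℕ) : ℕ :=
  if c = 0 then 0
  else if c % 2 = 1 then c / 2 + e
  else if q = 1 then c / 2 else c / 2 - 1 + 2 * e

lemma runEntry_le_runEntry {c d e q q' : ℕ} (he : e ≤ 1) (hdc : d ≤ c)
    (hq : d = c → q' = q) : runEntry d e q' ≤ runEntry c e q := by
  unfold runEntry; split_ifs <;> omega

lemma runEntry_le_add {c d e e' q q' : ℕ} (he : e + e' = 1) (hdc : d ≤ c) :
    runEntry d e' q' ≤ runEntry c e q + 2 * e' := by
  unfold runEntry; split_ifs <;> omega

lemma runEntry_add_runEntry (c k p : ℕ) :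
    runEntry c ((p + k) % 2) (p % 2) + runEntry c ((p + (k + 1)) % 2) (p % 2) = c := by
  unfold runEntry; split_ifs <;> omega

lemma two_mul_sum_runEntry (c p : ℕ) :
    ∀ m, (c % 2 = 0 → m % 2 = 0) →
      2 * ∑ k ∈ range m, runEntry c ((p + k) % 2) (p % 2) + (p + m) % 2 = c * m + p % 2
  | 0, _ => by simp
  | 1, hm => by simp only [range_one, sum_singleton, runEntry]; split_ifs <;> omega
  | m + 2, hm => by
    have ih := two_mul_sum_runEntry c p m (by omega)
    rw [sum_range_succ, sum_range_succ, add_assoc _ (runEntry _ _ _), runEntry_add_runEntry,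
      show c * (m + 2) = c * m + 2 * c by ring]
    omega

/-- Where the first two values of a string force its part: `a, a + 2` at an odd position comes
from `2a + 2`, otherwise `a` comes from `2a + 1`; `a, a` at an even position comes from `2a`,
otherwise `a` comes from `2a - 1`. -/
def leadPart (p a b : ℕ) : ℕ :=
  if p % 2 = 0 then (if b = a + 2 then 2 * a + 2 else 2 * a + 1)
  else (if b = a then 2 * a else 2 * a - 1)

lemma leadPart_spec {p a b : ℕ} (hb : b ≤ a + 2 * ((p + 1) % 2)) :
    runEntry (leadPart p a b) (p % 2) (p % 2) = a ∧
      b ≤ runEntry (leadPart p a b) ((p + 1) % 2) (p % 2) ∧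
      (leadPart p a b % 2 = 0 → b = runEntry (leadPart p a b) ((p + 1) % 2) (p % 2)) := by
  unfold leadPart runEntry; split_ifs <;> first | omega | contradiction

lemma leadPart_eq_zero {p a b : ℕ} (hb : b ≤ a + 2 * ((p + 1) % 2)) (h : leadPart p a b = 0) :
    p % 2 = 1 ∧ a = 0 ∧ b = 0 := by
  unfold leadPart at h; split_ifs at h <;> omega

lemma leadPart_lt {p q c a b : ℕ} (hc : 0 < c) (hq : q ≤ 1) (hcq : c % 2 = 0 → p % 2 = q)
    (hb : b ≤ a + 2 * ((p + 1) % 2))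
    (hbrk : a < runEntry c (p % 2) q ∨
      c % 2 = 0 ∧ a = runEntry c (p % 2) q ∧ b ≠ runEntry c ((p + 1) % 2) q) :
    leadPart p a b < c := by
  have hc0 : c ≠ 0 := by omega
  rcases Nat.mod_two_eq_zero_or_one c with hce | hco
  · have hr : ∀ e, runEntry c e q = if q = 1 then c / 2 else c / 2 - 1 + 2 * e := by
      simp [runEntry, hc0, hce]
    have := hcq hce
    rw [hr, hr] at hbrk
    unfold leadPart; split_ifs at * <;> omega
  · have hr : ∀ e, runEntry c e q = c / 2 + e := by simp [runEntry, hc0, hco]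
    rw [hr] at hbrk
    unfold leadPart; split_ifs at * <;> omega

lemma eq_or_le_one_of_runEntry_eq {c c' d d' x q : ℕ} (hq : q ≤ 1)
    (h0 : runEntry c q q = runEntry c' q q)
    (hx : x = runEntry c (1 - q) q ∨ c % 2 = 1 ∧ d < c ∧ x = runEntry d (1 - q) (1 - q))
    (hx' : x = runEntry c' (1 - q) q ∨ c' % 2 = 1 ∧ d' < c' ∧ x = runEntry d' (1 - q) (1 - q)) :
    c = c' ∨ c ≤ 1 ∧ c' ≤ 1 := by
  rcases hx with rfl | ⟨hc, hd, rfl⟩ <;> rcases hx' with hx' | ⟨hc', hd', hx'⟩ <;>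
    unfold runEntry at * <;> split_ifs at * <;> omega

lemma strStart_le (ν : ℕ → ℕ) (i : ℕ) : strStart ν i ≤ i := Nat.sInf_le rfl

lemma strStart_zero (ν : ℕ → ℕ) : strStart ν 0 = 0 := Nat.le_zero.mp (strStart_le ν 0)

lemma strStart_congr {ν : ℕ → ℕ} {i j : ℕ} (h : ν i = ν j) : strStart ν i = strStart ν j := by
  simp only [strStart, h]

/-- `T4` on the tail of a sequence starting at position `p`: only the parities of positions
and origins are shifted by `p`. -/
noncomputable def T4Shift (p : ℕ) (ν : ℕ → ℕ) (i : ℕ) : ℕ :=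
  runEntry (ν i) ((p + i) % 2) ((p + strStart ν i) % 2)

theorem T4_eq_T4Shift_zero : T4 = T4Shift 0 := by
  funext ν i
  have := strStart_le ν i
  unfold T4 T4Shift runEntry
  split_ifs <;> omega

lemma T4Shift_apply_zero (p : ℕ) (ν : ℕ → ℕ) : T4Shift p ν 0 = runEntry (ν 0) (p % 2) (p % 2) := by
  simp [T4Shift, strStart_zero]

lemma T4Shift_zero_right (p : ℕ) : T4Shift p 0 = 0 := by
  funext i; simp [T4Shift, runEntry]

def consRun (c m : ℕ) (ν : ℕ → ℕ) (i : ℕ) : ℕ := if i < m then c else ν (i - m)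

section consRun

variable {c m : ℕ} {ν : ℕ → ℕ}

lemma consRun_of_lt {i : ℕ} (h : i < m) : consRun c m ν i = c := if_pos h

@[simp] lemma consRun_add (i : ℕ) : consRun c m ν (m + i) = ν i := by simp [consRun]

lemma strStart_consRun_of_lt {i : ℕ} (h : i < m) : strStart (consRun c m ν) i = 0 :=
  Nat.le_zero.mp <| Nat.sInf_le <| by
    simp only [Set.mem_ofPred_eq, consRun_of_lt h, consRun_of_lt ((Nat.zero_le i).trans_lt h)]

lemma strStart_consRun_add (hν : ∀ j, ν j ≠ c) (i : ℕ) :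
    strStart (consRun c m ν) (m + i) = m + strStart ν i := by
  refine IsLeast.csInf_eq ⟨?_, fun k hk => ?_⟩
  · simp only [Set.mem_ofPred_eq, consRun_add]
    exact Nat.sInf_mem (⟨i, rfl⟩ : {j | ν j = ν i}.Nonempty)
  · simp only [Set.mem_ofPred_eq, consRun_add] at hk
    by_cases hkm : k < m
    · exact absurd (consRun_of_lt hkm ▸ hk).symm (hν i)
    · obtain ⟨j, rfl⟩ := Nat.exists_eq_add_of_le (not_lt.mp hkm)
      rw [consRun_add] at hk
      exact Nat.add_le_add_left (Nat.sInf_le (s := {j | ν j = ν i}) hk) m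

lemma T4Shift_consRun_of_lt (p : ℕ) {i : ℕ} (h : i < m) :
    T4Shift p (consRun c m ν) i = runEntry c ((p + i) % 2) (p % 2) := by
  simp [T4Shift, consRun_of_lt h, strStart_consRun_of_lt h]

lemma T4Shift_consRun_add (hν : ∀ j, ν j ≠ c) (p i : ℕ) :
    T4Shift p (consRun c m ν) (m + i) = T4Shift (p + m) ν i := by
  simp only [T4Shift, consRun_add, strStart_consRun_add hν, add_assoc]

/-- Cutting a run of `c` after its first `m` entries does not change `T4`: for odd `c` the
origin does not matter, and for even `c` its parity is kept. -/
lemma T4Shift_consRun_add_add (hν : ∀ j, ν j ≠ c) (hm : c % 2 = 1 ∨ m % 2 = 0) (p k i : ℕ) :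
    T4Shift p (consRun c (m + k) ν) (m + i) = T4Shift (p + m) (consRun c k ν) i := by
  rcases lt_or_ge i k with hi | hi
  · rw [T4Shift_consRun_of_lt _ (by omega), T4Shift_consRun_of_lt _ hi, ← add_assoc]
    unfold runEntry; split_ifs <;> omega
  · obtain ⟨j, rfl⟩ := Nat.exists_eq_add_of_le hi
    rw [← add_assoc, T4Shift_consRun_add hν, T4Shift_consRun_add hν, add_assoc]

end consRun

section sums

variable {f : ℕ → ℕ} {s t : ℕ}

lemma SumsTo.eventuallyZero (h : SumsTo f s) : EventuallyZero f :=
  let ⟨N, hN, _⟩ := h; ⟨N, hN⟩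

lemma EventuallyZero.comp_add (h : EventuallyZero f) (m : ℕ) : EventuallyZero fun i => f (m + i) :=
  let ⟨N, hN⟩ := h; ⟨N, fun j hj => hN _ (by omega)⟩

lemma EventuallyZero.exists_sumsTo (h : EventuallyZero f) : ∃ s, SumsTo f s :=
  let ⟨N, hN⟩ := h; ⟨_, N, hN, rfl⟩

lemma SumsTo.unique (hs : SumsTo f s) (ht : SumsTo f t) : s = t := by
  obtain ⟨N, hN, rfl⟩ := hs
  obtain ⟨M, hM, rfl⟩ := ht
  have key : ∀ {N M}, (∀ m, N ≤ m → f m = 0) → N ≤ M →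
      ∑ i ∈ range N, f i = ∑ i ∈ range M, f i := fun hN hNM =>
    sum_subset (range_subset_range.mpr hNM) fun i _ hi => hN i (by simpa using hi)
  rcases le_total N M with h | h
  exacts [key hN h, (key hM h).symm]

lemma SumsTo.of_shift {m : ℕ} (h : SumsTo (fun i => f (m + i)) s) :
    SumsTo f (∑ k ∈ range m, f k + s) := by
  obtain ⟨N, hN, rfl⟩ := h
  refine ⟨m + N, fun j hj => ?_, sum_range_add f m N⟩
  obtain ⟨k, rfl⟩ := Nat.exists_eq_add_of_le (le_of_add_le_left hj)
  exact hN k (by omega)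

lemma sumsTo_zero : SumsTo 0 0 := ⟨0, fun _ _ => rfl, rfl⟩

lemma sumsTo_consRun {c m : ℕ} (h : SumsTo f s) : SumsTo (consRun c m f) (c * m + s) := by
  have hpre : ∑ k ∈ range m, consRun c m f k = c * m := by
    rw [sum_congr rfl fun k hk => consRun_of_lt (mem_range.mp hk), sum_const, card_range,
      smul_eq_mul, mul_comm]
  have htail : SumsTo (fun i => consRun c m f (m + i)) s := by simpa only [consRun_add] using h
  simpa only [hpre] using htail.of_shift

end sums

/-- The partitions of the set `'Z¹`, without the condition on their sum. -/
def IsZ1Partition (ν : ℕ → ℕ) : Prop := IsPartitionSeq ν ∧ EvenPartsEvenMult ν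

section partitions

variable {ν : ℕ → ℕ} {c m : ℕ}

lemma IsPartitionSeq.antitone (h : IsPartitionSeq ν) : Antitone ν :=
  antitone_nat_of_succ_le h.2

lemma IsPartitionSeq.lt_of_apply_zero_lt (h : IsPartitionSeq ν) (hc : ν 0 < c) (j : ℕ) :
    ν j < c :=
  lt_of_le_of_lt (h.antitone (Nat.zero_le j)) hc

lemma IsPartitionSeq.apply_ne (h : IsPartitionSeq ν) (hc : ν 0 < c) (j : ℕ) : ν j ≠ c :=
  (h.lt_of_apply_zero_lt hc j).ne

lemma IsPartitionSeq.eq_zero (h : IsPartitionSeq ν) (h0 : ν 0 = 0) : ν = 0 :=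
  funext fun j => Nat.le_zero.mp (h0 ▸ h.antitone (Nat.zero_le j))

lemma isPartitionSeq_consRun (h : IsPartitionSeq ν) (hc : ν 0 ≤ c) :
    IsPartitionSeq (consRun c m ν) := by
  obtain ⟨⟨N, hN⟩, hdec⟩ := h
  refine ⟨⟨m + N, fun j hj => ?_⟩, fun i => ?_⟩
  · obtain ⟨k, rfl⟩ := Nat.exists_eq_add_of_le (le_of_add_le_left hj)
    rw [consRun_add]; exact hN k (by omega)
  · rcases lt_or_ge i m with hi | hi
    · rw [consRun_of_lt hi]
      rcases lt_or_ge (i + 1) m with hi' | hi'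
      · rw [consRun_of_lt hi']
      · rw [show i + 1 = m + 0 by omega, consRun_add]; exact hc
    · obtain ⟨k, rfl⟩ := Nat.exists_eq_add_of_le hi
      rw [add_assoc, consRun_add, consRun_add]; exact hdec k

lemma ncard_consRun_eq (hν : ∀ j, ν j ≠ c) (d : ℕ) :
    {j | consRun c m ν j = d}.ncard = (if d = c then m else 0) + {j | ν j = d}.ncard := by
  split_ifs with hd
  · subst hd
    have hrun : {j | consRun d m ν j = d} = Set.Iio m := by
      ext j
      simp only [Set.mem_ofPred_eq, Set.mem_Iio]
      refine ⟨fun hj => by_contra fun hjm => ?_, consRun_of_lt⟩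
      obtain ⟨k, rfl⟩ := Nat.exists_eq_add_of_le (not_lt.mp hjm)
      exact hν k (by rwa [consRun_add] at hj)
    simp [hrun, hν]
  · have himage : {j | consRun c m ν j = d} = (m + ·) '' {j | ν j = d} := by
      ext j
      simp only [Set.mem_ofPred_eq, Set.mem_image]
      constructor
      · intro hj
        by_cases hjm : j < m
        · exact absurd (consRun_of_lt hjm ▸ hj).symm hd
        · obtain ⟨k, rfl⟩ := Nat.exists_eq_add_of_le (not_lt.mp hjm)
          exact ⟨k, by rwa [consRun_add] at hj, rfl⟩
      · rintro ⟨k, hk, rfl⟩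
        rwa [consRun_add]
    rw [himage, Set.ncard_image_of_injective _ (add_right_injective m), zero_add]

lemma evenPartsEvenMult_consRun_iff (hν : ∀ j, ν j < c) (hc : 0 < c) :
    EvenPartsEvenMult (consRun c m ν) ↔ EvenPartsEvenMult ν ∧ (c % 2 = 0 → m % 2 = 0) := by
  have hne : ∀ j, ν j ≠ c := fun j => (hν j).ne
  have hempty : {j | ν j = c}.ncard = 0 := by simp [hne]
  constructor
  · intro h
    refine ⟨fun d hd hde => ?_, fun hce => ?_⟩
    · by_cases hdc : d = c
      · rw [hdc, hempty]; exact ⟨0, rfl⟩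
      · simpa [ncard_consRun_eq hne, hdc] using h d hd hde
    · simpa [ncard_consRun_eq hne, hempty, Nat.even_iff] using h c hc (Nat.even_iff.mpr hce)
  · rintro ⟨h, hm⟩ d hd hde
    by_cases hdc : d = c
    · subst hdc
      simpa [ncard_consRun_eq hne, hempty, Nat.even_iff] using hm (Nat.even_iff.mp hde)
    · simpa [ncard_consRun_eq hne, hdc] using h d hd hde

lemma isZ1Partition_consRun (h : IsZ1Partition ν) (hc : ν 0 < c) (hm : c % 2 = 0 → m % 2 = 0) :
    IsZ1Partition (consRun c m ν) :=
  ⟨isPartitionSeq_consRun h.1 hc.le,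
    (evenPartsEvenMult_consRun_iff (h.1.lt_of_apply_zero_lt hc) (by omega)).mpr ⟨h.2, hm⟩⟩

lemma IsZ1Partition.exists_eq_consRun (h : IsZ1Partition ν) (hc : ν 0 = c) (hc0 : c ≠ 0) :
    ∃ m ν', 0 < m ∧ (c % 2 = 0 → m % 2 = 0) ∧ IsZ1Partition ν' ∧ ν' 0 < c ∧
      ν = consRun c m ν' := by
  obtain ⟨N, hN⟩ := h.1.1
  have hex : ∃ j, ν j ≠ c := ⟨N, by rw [hN N le_rfl]; exact Ne.symm hc0⟩
  set m := Nat.find hex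
  have hrun : ∀ j < m, ν j = c := fun j hj => not_not.mp (Nat.find_min hex hj)
  have hm0 : 0 < m := (Nat.find_pos hex).mpr (not_not.mpr hc)
  have htail : ∀ j, ν (m + j) < c := fun j =>
    lt_of_le_of_lt (h.1.antitone (Nat.le_add_right m j))
      (lt_of_le_of_ne (hc ▸ h.1.antitone (Nat.zero_le m)) (Nat.find_spec hex))
  have heq : ν = consRun c m (fun j => ν (m + j)) := by
    funext j
    rcases lt_or_ge j m with hj | hj
    · rw [consRun_of_lt hj, hrun j hj]
    · obtain ⟨k, rfl⟩ := Nat.exists_eq_add_of_le hj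
      rw [consRun_add]
  have htail_part : IsPartitionSeq fun j => ν (m + j) :=
    ⟨h.1.1.comp_add m, fun j => h.1.2 (m + j)⟩
  have hmult := h.2
  rw [heq, evenPartsEvenMult_consRun_iff htail (by omega)] at hmult
  exact ⟨m, _, hm0, hmult.2, ⟨htail_part, hmult.1⟩, htail 0, heq⟩

lemma IsZ1Partition.eq_consRun_one (h : IsZ1Partition ν) (h1 : ν 0 ≤ 1) (hs : SumsTo ν s) :
    ν = consRun 1 s 0 := by
  rcases Nat.eq_zero_or_pos (ν 0) with h0 | h0
  · obtain rfl := h.1.eq_zero h0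
    rw [hs.unique sumsTo_zero]
    funext j; simp [consRun]
  · obtain ⟨m, ν', -, -, hν', h0', rfl⟩ := h.exists_eq_consRun (c := 1) (by omega) one_ne_zero
    obtain rfl := hν'.1.eq_zero (by omega)
    rw [hs.unique (sumsTo_consRun sumsTo_zero), one_mul, add_zero]

end partitions

/-- The bipartition and excess-`(2, 0)` inequalities, for a tail starting at position `p`. -/
def IsBP20 (p : ℕ) (l : ℕ → ℕ) : Prop :=
  (∀ i, l (i + 2) ≤ l i) ∧ ∀ i, l (i + 1) ≤ l i + 2 * ((p + (i + 1)) % 2)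

lemma isBP20_zero_iff {l : ℕ → ℕ} :
    IsBP20 0 l ↔ (∀ i, l (i + 2) ≤ l i) ∧ HasExcess 2 0 l := by
  refine and_congr_right' (forall_congr' fun i => ?_)
  rw [Nat.even_iff, Nat.odd_iff]
  omega

lemma IsBP20.shift {p : ℕ} {l : ℕ → ℕ} (h : IsBP20 p l) (m : ℕ) :
    IsBP20 (p + m) fun i => l (m + i) :=
  ⟨fun i => h.1 (m + i), fun i => by simpa only [add_assoc] using h.2 (m + i)⟩

lemma IsBP20.eq_zero {p : ℕ} {l : ℕ → ℕ} (h : IsBP20 p l) (h0 : l 0 = 0) (h1 : l 1 = 0) :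
    l = 0 := by
  have key : ∀ i, l i = 0 ∧ l (i + 1) = 0 := fun i => by
    induction i with
    | zero => exact ⟨h0, h1⟩
    | succ i ih => exact ⟨ih.2, Nat.le_zero.mp (ih.1 ▸ h.1 i)⟩
  exact funext fun i => (key i).1

lemma isBP20_T4Shift {ν : ℕ → ℕ} (hν : IsPartitionSeq ν) (p : ℕ) : IsBP20 p (T4Shift p ν) := by
  refine ⟨fun i => ?_, fun i => runEntry_le_add (by omega) (hν.2 i)⟩
  simp only [T4Shift]
  rw [show (p + (i + 2)) % 2 = (p + i) % 2 by omega]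
  exact runEntry_le_runEntry (by omega) (hν.antitone (Nat.le_add_right i 2))
    fun h => by rw [strStart_congr h]

lemma sumsTo_T4Shift {ν : ℕ → ℕ} {N : ℕ} (hν : IsZ1Partition ν) (hs : SumsTo ν N) (p : ℕ) :
    SumsTo (T4Shift p ν) ((N + p % 2) / 2) := by
  induction hc : ν 0 using Nat.strong_induction_on generalizing p N ν with
  | _ c ih =>
  rcases Nat.eq_zero_or_pos c with rfl | hc0
  · obtain rfl := hν.1.eq_zero hc
    rw [hs.unique sumsTo_zero, T4Shift_zero_right]
    simpa using sumsTo_zero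
  obtain ⟨m, ν', -, hm, hν', hlt, rfl⟩ := hν.exists_eq_consRun hc hc0.ne'
  obtain ⟨B, hB⟩ := hν'.1.1.exists_sumsTo
  have htail : SumsTo (fun i => T4Shift p (consRun c m ν') (m + i)) ((B + (p + m) % 2) / 2) := by
    simpa only [T4Shift_consRun_add (hν'.1.apply_ne hlt)] using ih _ hlt hν' hB (p + m) rfl
  have hpre : ∑ k ∈ range m, T4Shift p (consRun c m ν') k =
      ∑ k ∈ range m, runEntry c ((p + k) % 2) (p % 2) :=
    sum_congr rfl fun k hk => T4Shift_consRun_of_lt p (mem_range.mp hk)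
  have hrun := two_mul_sum_runEntry c p m hm
  rw [hs.unique (sumsTo_consRun hB)]
  convert htail.of_shift using 1
  omega

lemma T4Shift_apply_zero_one {ν : ℕ → ℕ} (hν : IsZ1Partition ν) (p : ℕ) :
    T4Shift p ν 0 = runEntry (ν 0) (p % 2) (p % 2) ∧
      (T4Shift p ν 1 = runEntry (ν 0) (1 - p % 2) (p % 2) ∨
        ν 0 % 2 = 1 ∧ ν 1 < ν 0 ∧ T4Shift p ν 1 = runEntry (ν 1) (1 - p % 2) (1 - p % 2)) := by
  refine ⟨T4Shift_apply_zero p ν, ?_⟩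
  obtain ⟨c, hc⟩ : ∃ c, ν 0 = c := ⟨_, rfl⟩
  rcases Nat.eq_zero_or_pos c with rfl | hc0
  · rw [hν.1.eq_zero hc, T4Shift_zero_right]
    left; simp [runEntry]
  obtain ⟨m, ν', hm0, hm, hν', hlt, rfl⟩ := hν.exists_eq_consRun hc hc0.ne'
  rw [hc]
  rcases lt_or_ge 1 m with h1 | h1
  · left
    rw [T4Shift_consRun_of_lt p h1, show (p + 1) % 2 = 1 - p % 2 by omega]
  · obtain rfl : m = 1 := by omega
    have hν1 : consRun c 1 ν' 1 = ν' 0 := consRun_add 0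
    have hT1 : T4Shift p (consRun c 1 ν') 1 = T4Shift (p + 1) ν' 0 :=
      T4Shift_consRun_add (hν'.1.apply_ne hlt) p 0
    right
    rw [hν1, hT1, T4Shift_apply_zero, show (p + 1) % 2 = 1 - p % 2 by omega]
    exact ⟨by omega, hlt, rfl⟩

lemma apply_zero_eq_of_T4Shift_eq {ν ν' : ℕ → ℕ} (hν : IsZ1Partition ν) (hν' : IsZ1Partition ν')
    {p : ℕ} (h0 : T4Shift p ν 0 = T4Shift p ν' 0) (h1 : T4Shift p ν 1 = T4Shift p ν' 1) :
    ν 0 = ν' 0 ∨ ν 0 ≤ 1 ∧ ν' 0 ≤ 1 := by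
  obtain ⟨e0, e1⟩ := T4Shift_apply_zero_one hν p
  obtain ⟨e0', e1'⟩ := T4Shift_apply_zero_one hν' p
  exact eq_or_le_one_of_runEntry_eq (by omega) (e0 ▸ e0' ▸ h0) e1 (h1 ▸ e1')

lemma T4Shift_consRun_ne {c m m' p : ℕ} {ν ν' : ℕ → ℕ} (hc : 2 ≤ c) (hmm' : m < m')
    (hm : c % 2 = 0 → m % 2 = 0 ∧ m' % 2 = 0)
    (hν : IsZ1Partition ν) (hlt : ν 0 < c) (hν' : IsZ1Partition ν') (hlt' : ν' 0 < c) :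
    T4Shift p (consRun c m ν) ≠ T4Shift p (consRun c m' ν') := by
  intro h
  obtain ⟨k, rfl⟩ := Nat.exists_eq_add_of_lt hmm'
  have hne : ∀ j, ν j ≠ c := hν.1.apply_ne hlt
  have hne' : ∀ j, ν' j ≠ c := hν'.1.apply_ne hlt'
  have htail : ∀ i, T4Shift (p + m) ν i = T4Shift (p + m) (consRun c (k + 1) ν') i := fun i => by
    rw [← T4Shift_consRun_add hne, h, add_assoc, T4Shift_consRun_add_add hne' (by omega)]
  have hrun : IsZ1Partition (consRun c (k + 1) ν') :=
    isZ1Partition_consRun hν' hlt' fun hce => by have := hm hce; omega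
  rcases apply_zero_eq_of_T4Shift_eq hν hrun (htail 0) (htail 1) with h0 | h0 <;>
    rw [consRun_of_lt (Nat.succ_pos k)] at h0 <;> omega

theorem T4Shift_injective {ν ν' : ℕ → ℕ} {N p : ℕ} (hν : IsZ1Partition ν)
    (hν' : IsZ1Partition ν') (hs : SumsTo ν N) (hs' : SumsTo ν' N)
    (h : T4Shift p ν = T4Shift p ν') : ν = ν' := by
  induction hc : ν 0 using Nat.strong_induction_on generalizing p N ν ν' with
  | _ c ih =>
  by_cases hle : ν 0 ≤ 1 ∧ ν' 0 ≤ 1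
  · rw [hν.eq_consRun_one hle.1 hs, hν'.eq_consRun_one hle.2 hs']
  have hc' : ν' 0 = c := by
    rcases apply_zero_eq_of_T4Shift_eq hν hν' (congrFun h 0) (congrFun h 1) with h0 | h0
    exacts [h0 ▸ hc, absurd h0 hle]
  have hc2 : 2 ≤ c := by rw [hc, hc'] at hle; omega
  obtain ⟨m, ν₁, -, hm, hν₁, hlt, rfl⟩ := hν.exists_eq_consRun hc (by omega)
  obtain ⟨m', ν₁', -, hm', hν₁', hlt', rfl⟩ := hν'.exists_eq_consRun hc' (by omega)
  obtain rfl : m = m' := by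
    rcases lt_trichotomy m m' with hmm' | rfl | hmm'
    · exact absurd h (T4Shift_consRun_ne hc2 hmm' (fun hce => ⟨hm hce, hm' hce⟩) hν₁ hlt hν₁' hlt')
    · rfl
    · exact absurd h.symm
        (T4Shift_consRun_ne hc2 hmm' (fun hce => ⟨hm' hce, hm hce⟩) hν₁' hlt' hν₁ hlt)
  obtain ⟨B, hB⟩ := hν₁.1.1.exists_sumsTo
  obtain ⟨B', hB'⟩ := hν₁'.1.1.exists_sumsTo
  have hBB' : B = B' := by
    have := (sumsTo_consRun hB).unique hs
    have := (sumsTo_consRun hB').unique hs'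
    omega
  subst hBB'
  have htail : T4Shift (p + m) ν₁ = T4Shift (p + m) ν₁' := funext fun i => by
    rw [← T4Shift_consRun_add (hν₁.1.apply_ne hlt),
      ← T4Shift_consRun_add (hν₁'.1.apply_ne hlt'), h]
  rw [ih _ hlt hν₁ hν₁' hB hB' htail rfl]

lemma isZ1Partition_zero : IsZ1Partition 0 :=
  ⟨⟨⟨0, fun _ _ => rfl⟩, fun _ => le_rfl⟩, fun d hd _ => by simp [hd.ne]⟩

lemma IsBP20.exists_run {p c : ℕ} {l : ℕ → ℕ} (hl : IsBP20 p l) (hz : EventuallyZero l)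
    (hc : 0 < c) (h0 : l 0 = runEntry c (p % 2) (p % 2))
    (h1 : l 1 ≤ runEntry c ((p + 1) % 2) (p % 2))
    (h1e : c % 2 = 0 → l 1 = runEntry c ((p + 1) % 2) (p % 2)) :
    ∃ m, 0 < m ∧ (c % 2 = 0 → m % 2 = 0) ∧
      (∀ k < m, l k = runEntry c ((p + k) % 2) (p % 2)) ∧
      (l m < runEntry c ((p + m) % 2) (p % 2) ∨
        c % 2 = 0 ∧ l m = runEntry c ((p + m) % 2) (p % 2) ∧
          l (m + 1) ≠ runEntry c ((p + m + 1) % 2) (p % 2)) := by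
  obtain ⟨N, hN⟩ := hz
  have hex : ∃ k, 0 < k ∧ l k ≠ runEntry c ((p + k) % 2) (p % 2) := by
    refine ⟨2 * N + 1 + p % 2, by omega, ?_⟩
    rw [hN _ (by omega), show (p + (2 * N + 1 + p % 2)) % 2 = 1 by omega]
    unfold runEntry; split_ifs <;> omega
  obtain ⟨mh, ⟨hmh0, hmh⟩, hmin⟩ : ∃ mh, (0 < mh ∧ l mh ≠ runEntry c ((p + mh) % 2) (p % 2)) ∧
      ∀ k < mh, ¬(0 < k ∧ l k ≠ runEntry c ((p + k) % 2) (p % 2)) :=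
    ⟨Nat.find hex, Nat.find_spec hex, fun k hk => Nat.find_min hex hk⟩
  have hpre : ∀ k < mh, l k = runEntry c ((p + k) % 2) (p % 2) := fun k hk => by
    rcases Nat.eq_zero_or_pos k with rfl | hk0
    · simpa using h0
    · by_contra hne; exact hmin k hk ⟨hk0, hne⟩
  have hlt : l mh < runEntry c ((p + mh) % 2) (p % 2) := by
    refine lt_of_le_of_ne ?_ hmh
    rcases lt_or_ge mh 2 with h2 | h2
    · obtain rfl : mh = 1 := by omega
      exact h1
    · have := hl.1 (mh - 2)
      rwa [show mh - 2 + 2 = mh by omega, hpre (mh - 2) (by omega),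
        show (p + (mh - 2)) % 2 = (p + mh) % 2 by omega] at this
  -- the string of an even part has even length, so it stops before a mismatch inside a pair
  by_cases hodd : c % 2 = 0 ∧ mh % 2 = 1
  · have hmh1 : mh ≠ 1 := by rintro rfl; exact hmh (h1e hodd.1)
    refine ⟨mh - 1, by omega, fun _ => by omega, fun k hk => hpre k (by omega),
      Or.inr ⟨hodd.1, hpre _ (by omega), ?_⟩⟩
    rwa [show mh - 1 + 1 = mh by omega, show (p + (mh - 1) + 1) % 2 = (p + mh) % 2 by omega]
  · exact ⟨mh, hmh0, fun hce => by omega, hpre, Or.inl hlt⟩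

theorem exists_T4Shift_eq {p s : ℕ} {l : ℕ → ℕ} (hl : IsBP20 p l) (hs : SumsTo l s) :
    ∃ ν, IsZ1Partition ν ∧ ν 0 = leadPart p (l 0) (l 1) ∧ SumsTo ν (2 * s + 1 - p % 2) ∧
      T4Shift p ν = l := by
  induction hc : leadPart p (l 0) (l 1) using Nat.strong_induction_on generalizing p s l with
  | _ c ih =>
  have hb : l 1 ≤ l 0 + 2 * ((p + 1) % 2) := by simpa using hl.2 0
  rcases Nat.eq_zero_or_pos c with rfl | hc0
  · obtain ⟨hp, h0, h1⟩ := leadPart_eq_zero hb hc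
    obtain rfl := hl.eq_zero h0 h1
    rw [hs.unique sumsTo_zero]
    exact ⟨0, isZ1Partition_zero, rfl, by simpa [hp] using sumsTo_zero, T4Shift_zero_right p⟩
  obtain ⟨h0, h1, h1e⟩ := leadPart_spec hb
  rw [hc] at h0 h1 h1e
  obtain ⟨m, hm0, hm, hpre, hbrk⟩ := hl.exists_run hs.eventuallyZero hc0 h0.symm h1 h1e
  have hnext : leadPart (p + m) (l m) (l (m + 1)) < c :=
    leadPart_lt (q := p % 2) hc0 (by omega) (fun hce => by have := hm hce; omega)
      (by simpa only [add_assoc] using hl.2 m) hbrk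
  obtain ⟨B, hB⟩ := (hs.eventuallyZero.comp_add m).exists_sumsTo
  obtain ⟨ν', hν', hν'0, hsν', hT⟩ := ih _ hnext (hl.shift m) hB rfl
  have hlt : ν' 0 < c := hν'0 ▸ hnext
  refine ⟨consRun c m ν', isZ1Partition_consRun hν' hlt hm, consRun_of_lt hm0, ?_, ?_⟩
  · rw [hs.unique hB.of_shift, sum_congr rfl fun k hk => hpre k (mem_range.mp hk)]
    have := two_mul_sum_runEntry c p m hm
    convert sumsTo_consRun hsν' using 1
    omega
  · funext k
    rcases lt_or_ge k m with hk | hk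
    · rw [T4Shift_consRun_of_lt p hk, hpre k hk]
    · obtain ⟨j, rfl⟩ := Nat.exists_eq_add_of_le hk
      rw [T4Shift_consRun_add (hν'.1.apply_ne hlt), hT]

/-- 3.6(a): for odd N, the substitution is a bijection from 'Z¹_N (partitions of N
in which every even positive part occurs an even number of times) onto
BP^{(N-1)/2}_{2,0}. -/
theorem Z1'_bij_BP20 (N : ℕ) (hN : Odd N) :
    Set.BijOn T4
      {ν | IsPartitionSeq ν ∧ SumsTo ν N ∧ EvenPartsEvenMult ν}
      {l | IsBipartition l ∧ SumsTo l ((N - 1) / 2) ∧ HasExcess 2 0 l} := by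
  obtain ⟨k, rfl⟩ := hN
  rw [T4_eq_T4Shift_zero]
  refine ⟨fun ν ⟨hp, hs, he⟩ => ?_,
    fun ν ⟨hp, hs, he⟩ ν' ⟨hp', hs', he'⟩ h => T4Shift_injective ⟨hp, he⟩ ⟨hp', he'⟩ hs hs' h,
    fun l ⟨hb, hs, hex⟩ => ?_⟩
  · have hsum := sumsTo_T4Shift ⟨hp, he⟩ hs 0
    rw [show (2 * k + 1 + 0 % 2) / 2 = (2 * k + 1 - 1) / 2 by omega] at hsum
    exact ⟨⟨hsum.eventuallyZero, (isBP20_T4Shift hp 0).1⟩, hsum,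
      (isBP20_zero_iff.mp (isBP20_T4Shift hp 0)).2⟩
  · obtain ⟨ν, hν, -, hsν, rfl⟩ := exists_T4Shift_eq (isBP20_zero_iff.mpr ⟨hb.2, hex⟩) hs
    refine ⟨ν, ⟨hν.1, ?_, hν.2⟩, rfl⟩
    convert hsν using 1
    omega
end

section
/- For N even, let ι be the involution on bipartitions of N/2 sending (λ₁, λ₂, λ₃, λ₄, …) to (λ₂, λ₁, λ₄, λ₃, …). Then a bipartition λ of N/2 satisfies both λ ∈ BP^{N/2}_{0,4} and ι(λ) ∈ BP^{N/2}_{0,4} if and only if λ = ι(λ). In particular, the intersection of BP^{N/2}_{0,4} with any ι-orbit has at most one element. -/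
/-- The involution swapping the two rows of a bipartition:
(λ₁, λ₂, λ₃, λ₄, …) ↦ (λ₂, λ₁, λ₄, λ₃, …). -/
def iotaMap (l : ℕ → ℕ) : ℕ → ℕ := fun i => if i % 2 = 0 then l (i + 1) else l (i - 1)

lemma iotaMap_of_even {l : ℕ → ℕ} {i : ℕ} (hi : Even i) : iotaMap l i = l (i + 1) :=
  if_pos (Nat.even_iff.mp hi)

lemma iotaMap_succ_of_even {l : ℕ → ℕ} {i : ℕ} (hi : Even i) : iotaMap l (i + 1) = l i := by
  simp [iotaMap, Nat.odd_iff.mp hi.add_one]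

lemma iotaMap_eq_self_iff {l : ℕ → ℕ} : iotaMap l = l ↔ ∀ i, Even i → l (i + 1) = l i := by
  refine ⟨fun h i hi => by rw [← iotaMap_of_even (l := l) hi, h], fun h => funext fun i => ?_⟩
  rcases Nat.even_or_odd' i with ⟨k, rfl | rfl⟩
  · exact (iotaMap_of_even (even_two_mul k)).trans (h _ (even_two_mul k))
  · exact (iotaMap_succ_of_even (even_two_mul k)).trans (h _ (even_two_mul k)).symm

/-- Excess `0` at the paper-odd positions gives `λᵢ ≥ λᵢ₊₁` there, and for `ι λ` it gives
`λᵢ₊₁ ≥ λᵢ`. -/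
lemma iotaMap_eq_self_of_hasExcess {l : ℕ → ℕ} {e e' : ℕ} (h : HasExcess 0 e l)
    (hι : HasExcess 0 e' (iotaMap l)) : iotaMap l = l :=
  iotaMap_eq_self_iff.mpr fun i hi => by
    have hle := (h i).1 hi
    have hge := (hι i).1 hi
    rw [iotaMap_of_even hi, iotaMap_succ_of_even hi] at hge
    omega

lemma IsBipartition.hasExcess_of_iotaMap_eq_self {l : ℕ → ℕ} (hb : IsBipartition l)
    (h : iotaMap l = l) (e e' : ℕ) : HasExcess e e' l := by
  have hpair := iotaMap_eq_self_iff.mp h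
  refine fun i => ⟨fun hi => ?_, fun hi => ?_⟩
  · have := hpair i hi
    omega
  · have : l (i + 2) = l (i + 1) := hpair (i + 1) hi.add_one
    have := hb.2 i
    omega

theorem BP04_inter_iota_orbit_general (N : ℕ) (l : ℕ → ℕ)
    (hb : IsBipartition l) (hs : SumsTo l (N / 2)) :
    (HasExcess 0 4 l ∧ IsBipartition (iotaMap l) ∧ SumsTo (iotaMap l) (N / 2) ∧
      HasExcess 0 4 (iotaMap l)) ↔ l = iotaMap l := by
  constructor
  · rintro ⟨hex, -, -, hιex⟩
    exact (iotaMap_eq_self_of_hasExcess hex hιex).symm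
  · intro h
    have hex := hb.hasExcess_of_iotaMap_eq_self h.symm 0 4
    rw [← h]
    exact ⟨hex, hb, hs, hex⟩

/-- A bipartition λ of N/2 satisfies λ ∈ BP^{N/2}_{0,4} and ι(λ) ∈ BP^{N/2}_{0,4}
if and only if λ = ι(λ). -/
theorem BP04_inter_iota_orbit (N : ℕ) (hN : Even N) (l : ℕ → ℕ)
    (hb : IsBipartition l) (hs : SumsTo l (N / 2)) :
    (HasExcess 0 4 l ∧ IsBipartition (iotaMap l) ∧ SumsTo (iotaMap l) (N / 2) ∧
      HasExcess 0 4 (iotaMap l)) ↔ l = iotaMap l :=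
  BP04_inter_iota_orbit_general N l hb hs
end

section
/- Let W be a finite Coxeter group and, for each irreducible representation E of W over ℚ, let n_E denote the smallest i ≥ 0 such that E occurs in the i-th symmetric power of the reflection representation. Suppose W' ≤ W is a reflection subgroup, E ∈ Irr(W') is good (occurs with multiplicity one in the n_E-th symmetric power of the reflection representation of W'), and E₀ = j_{W'}^W(E) is the unique irreducible constituent of Ind_{W'}^W(E) with n_{E₀} = n_E. Then truncated induction is transitive: if W' ≤ W'' ≤ W with E good for W', then j_{W''}^W(j_{W'}^{W''}(E)) = j_{W'}^W(E), provided j_{W'}^{W''}(E) is good for W''. -/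
/-- Transitivity of truncated (j-) induction.  Here I1, I2, I3 are the sets of
irreducible representations of reflection subgroups W' ≤ W'' ≤ W of a finite
Coxeter group, n• are the fake-degree invariants n_E, m12 E D is the multiplicity
of D in Ind_{W'}^{W''} E (etc.), induction is transitive (hInd), every constituent
of an induced representation has n at least that of the inducing one (hmono), and
j is characterized as the unique constituent with equal n.  Then
j_{W''}^W (j_{W'}^{W''} E) = j_{W'}^W E for good E, provided j_{W'}^{W''} E is good. -/
theorem truncated_induction_transitive
    (I1 I2 I3 : Type*) [Fintype I2]
    (n1 : I1 → ℕ) (n2 : I2 → ℕ) (n3 : I3 → ℕ)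
    (good1 : I1 → Prop) (good2 : I2 → Prop)
    (m12 : I1 → I2 → ℕ) (m23 : I2 → I3 → ℕ) (m13 : I1 → I3 → ℕ)
    (hInd : ∀ E F, m13 E F = ∑ D : I2, m12 E D * m23 D F)
    (hmono12 : ∀ E D, 0 < m12 E D → n1 E ≤ n2 D)
    (hmono23 : ∀ D F, 0 < m23 D F → n2 D ≤ n3 F)
    (j12 : I1 → I2) (j23 : I2 → I3) (j13 : I1 → I3)
    (hj12 : ∀ E, good1 E → 0 < m12 E (j12 E) ∧ n2 (j12 E) = n1 E ∧
      ∀ D, 0 < m12 E D → n2 D = n1 E → D = j12 E)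
    (hj23 : ∀ D, good2 D → 0 < m23 D (j23 D) ∧ n3 (j23 D) = n2 D ∧
      ∀ F, 0 < m23 D F → n3 F = n2 D → F = j23 D)
    (hj13 : ∀ E, good1 E → 0 < m13 E (j13 E) ∧ n3 (j13 E) = n1 E ∧
      ∀ F, 0 < m13 E F → n3 F = n1 E → F = j13 E) :
    ∀ E, good1 E → good2 (j12 E) → j23 (j12 E) = j13 E := by
  intro E hE hD
  obtain ⟨h12pos, h12n, _⟩ := hj12 E hE
  obtain ⟨h23pos, h23n, _⟩ := hj23 (j12 E) hD
  obtain ⟨_, _, huniq⟩ := hj13 E hE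
  apply huniq
  · rw [hInd]
    exact lt_of_lt_of_le (Nat.mul_pos h12pos h23pos)
      (Finset.single_le_sum (f := fun D => m12 E D * m23 D (j23 (j12 E))) (fun _ _ => Nat.zero_le _) (Finset.mem_univ (j12 E)))
  · rw [h23n, h12n]
end
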